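/- arXiv:2103.10340 — 5 statements merged into one kernel-verified Lean document; each statement's English description precedes it below -/
import Mathlib

section
/- For every infinite cardinal λ and all r, k ∈ ω, every hypergraph 𝓔 ⊆ [λ]^ω (i.e., every edge is a countably infinite subset of λ) possessing property C(r,k) has a minimal vertex cover. -/
open Cardinal Set

universe u

/-- `𝓔` possesses property C(k,ρ): every `k`-element subfamily of `𝓔` has
intersection of cardinality `< ρ`. -/
def HasPropC {α : Type u} (𝓔 : Set (Set α)) (k : ℕ) (ρ : Cardinal.{u}) : Prop :=
  ∀ 𝓔' : Finset (Set α), ↑𝓔' ⊆ 𝓔 → 𝓔'.card = k →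
    #(⋂₀ (𝓔' : Set (Set α)) : Set α) < ρ

/-- `Y` is a vertex cover of the hypergraph `𝓔`. -/
def IsVC {α : Type u} (𝓔 : Set (Set α)) (Y : Set α) : Prop :=
  Y ⊆ ⋃₀ 𝓔 ∧ ∀ E ∈ 𝓔, (Y ∩ E).Nonempty

/-- `Y` is a minimal vertex cover of `𝓔`: a vertex cover no proper subset of
which is a vertex cover. -/
def IsMinVC {α : Type u} (𝓔 : Set (Set α)) (Y : Set α) : Prop :=
  IsVC 𝓔 Y ∧ ∀ Z, Z ⊂ Y → ¬ IsVC 𝓔 Z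

/-- `𝓔` has a minimal vertex cover. -/
def HasMinVC {α : Type u} (𝓔 : Set (Set α)) : Prop := ∃ Y, IsMinVC 𝓔 Y

/-- `𝓔` has a maximizing well-ordering: a well-ordering of `⋃₀ 𝓔` in which
every edge has a maximal element. -/
def HasMaxWO {α : Type u} (𝓔 : Set (Set α)) : Prop :=
  ∃ r : (⋃₀ 𝓔 : Set α) → (⋃₀ 𝓔 : Set α) → Prop, IsWellOrder _ r ∧
    ∀ E ∈ 𝓔, ∃ m : (⋃₀ 𝓔 : Set α), (m : α) ∈ E ∧
      ∀ x : (⋃₀ 𝓔 : Set α), (x : α) ∈ E → ¬ r m x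

/-- `𝓑` is a shrink of `𝓐` (`𝓑 ≪ 𝓐`). -/
def IsShrink {α : Type u} (𝓑 𝓐 : Set (Set α)) : Prop :=
  ∀ B ∈ 𝓑, ∃ A ∈ 𝓐, B ⊆ A ∧ #(A \ B : Set α) < #A

/-- `G` (restricted to the ordinals below `cf(|⋃₀ 𝓐|)`) is a good cut of `𝓐`:
an increasing continuous sequence of subsets of `⋃₀ 𝓐` of cardinality `< |⋃₀ 𝓐|`,
starting at `∅`, with union `⋃₀ 𝓐`, such that every `A ∈ 𝓐` is contained in some
`G (β+1)` with `|G β ∩ A| < |A|`. -/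
def IsGoodCut {α : Type u} (𝓐 : Set (Set α)) (G : Ordinal.{u} → Set α) : Prop :=
  (∀ β γ : Ordinal.{u}, β ≤ γ → γ < (#(⋃₀ 𝓐 : Set α)).ord.cof.ord → G β ⊆ G γ) ∧
  G 0 = ∅ ∧
  (∀ β < (#(⋃₀ 𝓐 : Set α)).ord.cof.ord, Order.IsSuccLimit β → G β = ⋃ γ ∈ Set.Iio β, G γ) ∧
  (∀ β < (#(⋃₀ 𝓐 : Set α)).ord.cof.ord,
    #(G β) < #(⋃₀ 𝓐 : Set α) ∧ G β ⊆ ⋃₀ 𝓐) ∧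
  (⋃ β ∈ Set.Iio (#(⋃₀ 𝓐 : Set α)).ord.cof.ord, G β) = ⋃₀ 𝓐 ∧
  (∀ A ∈ 𝓐, ∃ β < (#(⋃₀ 𝓐 : Set α)).ord.cof.ord,
    A ⊆ G (β + 1) ∧ #(G β ∩ A : Set α) < #A)

/-! It suffices to well-order the vertices so that every edge has a greatest element: going up
this order and taking the top of every edge not met so far yields a minimal vertex cover.
Such an order is built by induction on the number `μ` of vertices.

If `μ ≤ ℵ₀`, there are countably many edges and any `r + 1` of them meet in a finite set; induct
on `r`. Enumerate the edges as `e₀, e₁, …` and let the points first covered by `eₙ` form the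
`n`-th block. Inside block `n` one point of `eₙ` goes on top; the traces of the other edges lie
in `eₙ`, so already `r` of them meet in a finite set.

If `μ > ℵ₀`, a `k`-set lies in fewer than `r` edges, so closing the initial segments of an
enumeration of the vertices in type `μ.ord` under adding every edge met in `k` points keeps them
of size `< μ`. Every edge is contained in the first stage `γ` it meets in `k` points, and fewer
than `k` of its points enter before `γ`; the parts of the edges lying on their top stage form,
stage by stage, smaller instances, and the orders they get are concatenated along the stages. -/

variable {α : Type u}

-- A maximizing well-ordering (`HasMaxWO`) of the whole of `α`, given by an injective ordinal rank.
def HasMaxRank (𝓔 : Set (Set α)) : Prop :=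
  ∃ ρ : α → Ordinal.{u}, Function.Injective ρ ∧ ∀ E ∈ 𝓔, ∃ m ∈ E, ∀ x ∈ E, ρ x ≤ ρ m

theorem HasMaxRank.hasMinVC {𝓔 : Set (Set α)} (h : HasMaxRank 𝓔) : HasMinVC 𝓔 := by
  obtain ⟨ρ, hρ, hmax⟩ := h
  have wf : WellFounded fun a b : α => ρ a < ρ b := InvImage.wf ρ Ordinal.lt_wf
  -- Greedy choice along `ρ`: `v` is taken iff it is the top of an edge none of whose
  -- lower vertices has been taken.
  let P : α → Prop := wf.fix fun v taken => ∃ E ∈ 𝓔, v ∈ E ∧ (∀ x ∈ E, ρ x ≤ ρ v) ∧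
    ∀ w (hw : ρ w < ρ v), w ∈ E → ¬ taken w hw
  have hP : ∀ v, P v ↔ ∃ E ∈ 𝓔, v ∈ E ∧ (∀ x ∈ E, ρ x ≤ ρ v) ∧
      ∀ w, ρ w < ρ v → w ∈ E → ¬ P w := fun v => by
    rw [show P v = _ from wf.fix_eq _ v]
  refine ⟨{v | P v}, ⟨fun v hv => ?_, fun E hE => ?_⟩, fun Z hZY hZ => ?_⟩
  · obtain ⟨E, hE, hvE, -⟩ := (hP v).1 hv
    exact ⟨E, hE, hvE⟩
  · by_contra hmiss
    obtain ⟨m, hmE, hm⟩ := hmax E hE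
    exact hmiss ⟨m, (hP m).2 ⟨E, hE, hmE, hm, fun w _ hwE hw => hmiss ⟨w, hw, hwE⟩⟩, hmE⟩
  · obtain ⟨y, hyY, hyZ⟩ := exists_of_ssubset hZY
    obtain ⟨E, hE, hyE, hytop, hybelow⟩ := (hP y).1 hyY
    obtain ⟨w, hwZ, hwE⟩ := hZ.2 E hE
    rcases (hytop w hwE).lt_or_eq with hlt | heq
    · exact hybelow w hlt hwE (hZY.1 hwZ)
    · exact hyZ (hρ heq ▸ hwZ)

theorem hasMaxRank_empty : HasMaxRank (∅ : Set (Set α)) :=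
  ⟨fun v => Ordinal.typein WellOrderingRel v, Ordinal.typein_injective _, by simp⟩

theorem HasMaxRank.of_infinite {𝓔 : Set (Set α)} (hne : ∀ E ∈ 𝓔, E.Nonempty)
    (h : HasMaxRank {E ∈ 𝓔 | E.Infinite}) : HasMaxRank 𝓔 := by
  obtain ⟨ρ, hρ, hmax⟩ := h
  refine ⟨ρ, hρ, fun E hE => ?_⟩
  by_cases hE' : E.Infinite
  · exact hmax E ⟨hE, hE'⟩
  · exact exists_max_image E ρ (not_infinite.1 hE') (hne E hE)

theorem HasMaxRank.of_top {𝓔 : Set (Set α)} (p : α) (h : HasMaxRank {E ∈ 𝓔 | p ∉ E}) :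
    HasMaxRank 𝓔 := by
  classical
  obtain ⟨ρ, hρ, hmax⟩ := h
  have hlt : ∀ v, ρ v < (⨆ w, ρ w) + 1 := fun v =>
    Order.lt_add_one_iff.2 (le_ciSup Ordinal.bddAbove_of_small v)
  refine ⟨fun v => if v = p then (⨆ w, ρ w) + 1 else ρ v, fun x y hxy => ?_, fun E hE => ?_⟩
  · by_cases hx : x = p <;> by_cases hy : y = p <;> simp only [hx, hy, if_true, if_false] at hxy
    · exact hx.trans hy.symm
    · exact absurd hxy (hlt y).ne'
    · exact absurd hxy (hlt x).ne
    · exact hρ hxy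
  by_cases hpE : p ∈ E
  · refine ⟨p, hpE, fun x _ => ?_⟩
    by_cases hx : x = p <;> simp [hx, (hlt x).le]
  · obtain ⟨m, hmE, hm⟩ := hmax E ⟨hE, hpE⟩
    have hne : ∀ x ∈ E, x ≠ p := fun x hx h => hpE (h ▸ hx)
    exact ⟨m, hmE, fun x hx => by simpa [hne x hx, hne m hmE] using hm x hx⟩

theorem Ordinal.mul_add_lt_mul_add {Ω a b c d : Ordinal} (hb : b < Ω) (hac : a < c) :
    Ω * a + b < Ω * c + d :=
  calc Ω * a + b < Ω * a + Ω := by gcongr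
    _ = Ω * Order.succ a := (Ordinal.mul_succ Ω a).symm
    _ ≤ Ω * c := by gcongr; exact Order.succ_le_of_lt hac
    _ ≤ Ω * c + d := le_self_add

def levelTraces (𝓔 : Set (Set α)) (lv : α → Ordinal.{u}) (γ : Ordinal.{u}) : Set (Set α) :=
  (· ∩ lv ⁻¹' {γ}) '' {E ∈ 𝓔 | IsGreatest (lv '' E) γ}

theorem HasMaxRank.of_levels {𝓔 : Set (Set α)} (lv : α → Ordinal.{u})
    (h : ∀ E ∈ 𝓔, ∃ γ, IsGreatest (lv '' E) γ ∧ HasMaxRank (levelTraces 𝓔 lv γ)) :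
    HasMaxRank 𝓔 := by
  have hθ : ∀ γ, ∃ θ : α → Ordinal.{u}, Function.Injective θ ∧
      (HasMaxRank (levelTraces 𝓔 lv γ) →
        ∀ t ∈ levelTraces 𝓔 lv γ, ∃ m ∈ t, ∀ x ∈ t, θ x ≤ θ m) := by
    intro γ
    by_cases hγ : HasMaxRank (levelTraces 𝓔 lv γ)
    · obtain ⟨θ, hθ, hmax⟩ := hγ
      exact ⟨θ, hθ, fun _ => hmax⟩
    · obtain ⟨θ, hθ, -⟩ := hasMaxRank_empty (α := α)
      exact ⟨θ, hθ, fun h => absurd h hγ⟩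
  choose θ hθ hmax using hθ
  -- Order the vertices lexicographically: first by level, then by the rank of their level.
  set rk : α → Ordinal.{u} := fun v => θ (lv v) v
  set Ω : Ordinal.{u} := (⨆ v, rk v) + 1
  have hrk : ∀ v, rk v < Ω := fun v => Order.lt_add_one_iff.2 (le_ciSup Ordinal.bddAbove_of_small v)
  have hlt : ∀ x y, lv x < lv y → Ω * lv x + rk x < Ω * lv y + rk y := fun x y h =>
    Ordinal.mul_add_lt_mul_add (hrk x) h
  refine ⟨fun v => Ω * lv v + rk v, fun x y hxy => ?_, fun E hE => ?_⟩
  · rcases lt_trichotomy (lv x) (lv y) with h | h | h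
    · exact absurd hxy (hlt x y h).ne
    · simp only [rk, h] at hxy
      exact hθ _ (add_left_cancel hxy)
    · exact absurd hxy (hlt y x h).ne'
  obtain ⟨γ, hγ, hγrank⟩ := h E hE
  obtain ⟨m, ⟨hmE, hmγ⟩, hm⟩ :=
    hmax γ hγrank (E ∩ lv ⁻¹' {γ}) ⟨E, ⟨hE, hγ⟩, rfl⟩
  refine ⟨m, hmE, fun x hx => ?_⟩
  rcases (hγ.2 (mem_image_of_mem lv hx)).lt_or_eq with hxγ | hxγ
  · exact (hlt x m (hmγ ▸ hxγ)).le
  · simp only [rk, hxγ, show lv m = γ from hmγ]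
    gcongr
    exact hm x ⟨hx, hxγ⟩

section HasPropC

variable {𝓔 𝓕 : Set (Set α)} {r k : ℕ} {ρ : Cardinal.{u}}

theorem HasPropC.anti (hC : HasPropC 𝓔 r ρ) (h : 𝓕 ⊆ 𝓔) : HasPropC 𝓕 r ρ :=
  fun s hs => hC s (hs.trans h)

theorem HasPropC.mono {r' : ℕ} {ρ' : Cardinal.{u}} (hC : HasPropC 𝓔 r ρ) (hr : r ≤ r')
    (hρ : ρ ≤ ρ') : HasPropC 𝓔 r' ρ' := by
  intro s hs hcard
  obtain ⟨t, hts, htcard⟩ := Finset.exists_subset_card_eq (hcard ▸ hr : r ≤ s.card)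
  calc #(⋂₀ (s : Set (Set α))) ≤ #(⋂₀ (t : Set (Set α))) :=
        mk_le_mk_of_subset (sInter_subset_sInter (by exact_mod_cast hts))
    _ < ρ := hC t ((Finset.coe_subset.2 hts).trans hs) htcard
    _ ≤ ρ' := hρ

theorem HasPropC.image (hC : HasPropC 𝓔 r ρ) (f : Set α → Set α) (hf : ∀ E ∈ 𝓔, f E ⊆ E) :
    HasPropC (f '' 𝓔) r ρ := by
  classical
  intro s hs hcard
  obtain ⟨t, ht𝓔, htinj, rfl⟩ := Finset.exists_subset_injOn_image_eq_of_surjOn 𝓔 s hs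
  refine lt_of_le_of_lt (mk_le_mk_of_subset fun x hx => mem_sInter.2 fun E hE => ?_)
    (hC t ht𝓔 (by rwa [Finset.card_image_of_injOn htinj] at hcard))
  exact hf E (ht𝓔 hE) (mem_sInter.1 hx (f E) (by simpa using ⟨E, hE, rfl⟩))

theorem HasPropC.image_inter_of_mem {e : Set α} (hC : HasPropC 𝓔 (r + 2) ρ) (he : e ∈ 𝓔) :
    HasPropC ((· ∩ e) '' (𝓔 \ {e})) (r + 1) ρ := by
  classical
  intro s hs hcard
  obtain ⟨t, ht𝓔, htinj, rfl⟩ := Finset.exists_subset_injOn_image_eq_of_surjOn _ s hs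
  rw [Finset.card_image_of_injOn htinj] at hcard
  have het : e ∉ t := fun h => (ht𝓔 h).2 rfl
  obtain ⟨E₀, hE₀⟩ := Finset.card_pos.1 (by rw [hcard]; exact r.succ_pos)
  refine lt_of_le_of_lt (mk_le_mk_of_subset fun x hx => mem_sInter.2 fun E hE => ?_)
    (hC (insert e t) ?_ (by rw [Finset.card_insert_of_notMem het, hcard]))
  · have hxE : ∀ E ∈ t, x ∈ E ∩ e := fun E hE =>
      mem_sInter.1 hx (E ∩ e) (by simpa using ⟨E, hE, rfl⟩)
    rcases Finset.mem_insert.1 (by exact_mod_cast hE) with rfl | hE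
    · exact (hxE E₀ hE₀).2
    · exact (hxE E hE).1
  · rw [Finset.coe_insert]
    exact insert_subset he fun E hE => (ht𝓔 hE).1

theorem HasPropC.finite_setOf_subset (hC : HasPropC 𝓔 r k) (F : Finset α) (hF : F.card = k) :
    {E ∈ 𝓔 | ↑F ⊆ E}.Finite := by
  by_contra hinf
  obtain ⟨s, hs, hcard⟩ := Set.Infinite.exists_subset_card_eq hinf r
  refine (hC s (fun E hE => (hs hE).1) hcard).not_ge ?_
  calc (k : Cardinal) = #(F : Set α) := by simp [hF]
    _ ≤ _ := mk_le_mk_of_subset fun x hx => mem_sInter.2 fun E hE => (hs hE).2 hx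

end HasPropC

section Countable

noncomputable def firstIndex (e : ℕ → Set α) (v : α) : ℕ := sInf {n | v ∈ e n}

variable {e : ℕ → Set α} {v : α} {n : ℕ}

theorem firstIndex_le (h : v ∈ e n) : firstIndex e v ≤ n := Nat.sInf_le h

theorem mem_firstIndex (h : v ∈ e n) : v ∈ e (firstIndex e v) :=
  Nat.sInf_mem (s := {n | v ∈ e n}) ⟨n, h⟩

theorem exists_isGreatest_firstIndex (h : (e n).Nonempty) :
    ∃ m, IsGreatest (firstIndex e '' e n) m :=
  BddAbove.exists_isGreatest_of_nonempty ⟨n, by rintro _ ⟨v, hv, rfl⟩; exact firstIndex_le hv⟩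
    (h.image _)

/-- On level `n` a point of `e n` is put on top; the traces of the other edges lie in `e n`,
so any `r + 1` of them meet in a finite set. -/
theorem hasMaxRank_levelTraces_firstIndex {r : ℕ}
    (IH : ∀ 𝓕 : Set (Set α), 𝓕.Countable → (∀ E ∈ 𝓕, E.Infinite) →
      HasPropC 𝓕 (r + 1) ℵ₀ → HasMaxRank 𝓕)
    (hC : HasPropC (range e) (r + 2) ℵ₀) {p : α}
    (hp : p ∈ e n) (hpn : firstIndex e p = n) :
    HasMaxRank (levelTraces (range e) (fun v => (firstIndex e v : Ordinal.{u})) n) := by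
  set L := (fun v => (firstIndex e v : Ordinal.{u})) ⁻¹' {(n : Ordinal.{u})}
  have hL : ∀ v, v ∈ L ↔ firstIndex e v = n := fun v => by simp [L]
  have hLe : ∀ E ∈ range e, E ∩ L = (E ∩ e n) ∩ L := by
    rintro _ ⟨m, rfl⟩
    ext v
    refine ⟨fun ⟨hv, hvL⟩ => ⟨⟨hv, ?_⟩, hvL⟩, fun ⟨⟨hv, _⟩, hvL⟩ => ⟨hv, hvL⟩⟩
    simpa [(hL v).1 hvL] using mem_firstIndex hv
  refine HasMaxRank.of_top p (HasMaxRank.of_infinite ?_ (IH _ ?_ (fun t ht => ht.2) ?_))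
  · rintro _ ⟨⟨E, ⟨-, hγ⟩, rfl⟩, -⟩
    obtain ⟨v, hv, hvn⟩ := hγ.1
    exact ⟨v, hv, hvn⟩
  · refine ((countable_range e).image (· ∩ L)).mono ?_
    rintro _ ⟨⟨⟨E, ⟨hE, -⟩, rfl⟩, -⟩, -⟩
    exact mem_image_of_mem _ hE
  · refine ((hC.image_inter_of_mem (mem_range_self n)).image (· ∩ L)
      fun _ _ => inter_subset_left).anti ?_
    rintro _ ⟨⟨⟨E, ⟨hE, -⟩, rfl⟩, hpE⟩, -⟩
    refine ⟨E ∩ e n, ⟨E, ⟨hE, fun hEn => hpE ?_⟩, rfl⟩, (hLe E hE).symm⟩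
    exact ⟨(show E = e n from hEn) ▸ hp, (hL p).2 hpn⟩

theorem hasMaxRank_of_countable (r : ℕ) : ∀ 𝓔 : Set (Set α), 𝓔.Countable →
    (∀ E ∈ 𝓔, E.Infinite) → HasPropC 𝓔 (r + 1) ℵ₀ → HasMaxRank 𝓔 := by
  induction r with
  | zero =>
    intro 𝓔 _ hinf hC
    obtain rfl : 𝓔 = ∅ := eq_empty_of_forall_notMem fun E hE =>
      hinf E hE (lt_aleph0_iff_set_finite.1 (by simpa using hC {E} (by simpa) rfl))
    exact hasMaxRank_empty
  | succ r IH =>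
    intro 𝓔 hcount hinf hC
    rcases 𝓔.eq_empty_or_nonempty with rfl | hne
    · exact hasMaxRank_empty
    obtain ⟨e, rfl⟩ := hcount.exists_eq_range hne
    refine HasMaxRank.of_levels (fun v => (firstIndex e v : Ordinal.{u})) ?_
    rintro _ ⟨N, rfl⟩
    obtain ⟨n, hn⟩ := exists_isGreatest_firstIndex (hinf _ (mem_range_self N)).nonempty
    obtain ⟨p, hpN, hpn⟩ := hn.1
    refine ⟨n, by simpa [image_image] using Nat.mono_cast.map_isGreatest hn,
      hasMaxRank_levelTraces_firstIndex IH hC (hpn ▸ mem_firstIndex hpN) hpn⟩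

end Countable

section Closure

variable (𝓔 : Set (Set α)) (k : ℕ)

def edgesMeeting (X : Set α) : Set (Set α) :=
  {E ∈ 𝓔 | ∃ F : Finset α, ↑F ⊆ E ∩ X ∧ F.card = k}

def edgeClosure (X : Set α) : Set α :=
  ⋃ n : ℕ, (fun Y => Y ∪ ⋃₀ edgesMeeting 𝓔 k Y)^[n] X

variable {𝓔 k}

theorem edgesMeeting_mono : Monotone (edgesMeeting 𝓔 k) :=
  fun _ _ hXY _ ⟨hE, F, hF, hcard⟩ => ⟨hE, F, hF.trans (inter_subset_inter_right _ hXY), hcard⟩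

theorem subset_edgeClosure (X : Set α) : X ⊆ edgeClosure 𝓔 k X :=
  subset_iUnion_of_subset 0 subset_rfl

theorem edgeClosure_mono : Monotone (edgeClosure 𝓔 k) := fun _ _ hXY =>
  iUnion_mono fun n => Monotone.iterate
    (fun _ _ h => union_subset_union h (sUnion_mono (edgesMeeting_mono h))) n hXY

theorem subset_edgeClosure_of_mem_edgesMeeting {X E : Set α}
    (hE : E ∈ edgesMeeting 𝓔 k (edgeClosure 𝓔 k X)) : E ⊆ edgeClosure 𝓔 k X := by
  obtain ⟨hE𝓔, F, hF, hcard⟩ := hE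
  have hdir : Monotone fun n => (fun Y => Y ∪ ⋃₀ edgesMeeting 𝓔 k Y)^[n] X :=
    monotone_nat_of_le_succ fun n => by
      rw [Function.iterate_succ_apply']
      exact subset_union_left
  obtain ⟨n, hn⟩ := hdir.directed_le.exists_mem_subset_of_finset_subset_biUnion
    (hF.trans inter_subset_right)
  refine subset_iUnion_of_subset (n + 1) ?_
  rw [Function.iterate_succ_apply']
  exact subset_union_of_subset_right (subset_sUnion_of_mem (S := edgesMeeting 𝓔 k _)
    ⟨hE𝓔, F, subset_inter (hF.trans inter_subset_left) hn, hcard⟩) _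

theorem mk_setOf_finset_subset_le (X : Set α) : #{F : Finset α | ↑F ⊆ X} ≤ max ℵ₀ #X := by
  classical
  calc #{F : Finset α | ↑F ⊆ X}
      ≤ #(Finset X) := mk_le_of_injective (f := fun F => F.1.subtype (· ∈ X)) fun F G h => by
        have := congrArg (Finset.map (Function.Embedding.subtype (· ∈ X))) h
        simpa [Finset.subtype_map_of_mem fun x hx => F.2 hx,
          Finset.subtype_map_of_mem fun x hx => G.2 hx, Subtype.ext_iff] using this
    _ ≤ #(List X) := mk_le_of_surjective List.toFinset_surjective
    _ ≤ max ℵ₀ #X := mk_list_le_max X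

variable (hthrough : ∀ F : Finset α, F.card = k → {E ∈ 𝓔 | ↑F ⊆ E}.Countable)
include hthrough

theorem mk_edgesMeeting_le (X : Set α) : #(edgesMeeting 𝓔 k X) ≤ max ℵ₀ #X := by
  have hsub : edgesMeeting 𝓔 k X ⊆
      ⋃ F ∈ {F : Finset α | ↑F ⊆ X ∧ F.card = k}, {E ∈ 𝓔 | ↑F ⊆ E} := by
    rintro E ⟨hE, F, hF, hcard⟩
    exact mem_biUnion (x := F) ⟨hF.trans inter_subset_right, hcard⟩ ⟨hE, hF.trans inter_subset_left⟩
  have hM : ℵ₀ ≤ max ℵ₀ #X := le_max_left _ _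
  calc #(edgesMeeting 𝓔 k X) ≤ _ := mk_le_mk_of_subset hsub
    _ ≤ #{F : Finset α | ↑F ⊆ X ∧ F.card = k} * ⨆ F : {F : Finset α | ↑F ⊆ X ∧ F.card = k},
          #{E ∈ 𝓔 | ↑(F : Finset α) ⊆ E} := mk_biUnion_le _ _
    _ ≤ max ℵ₀ #X * max ℵ₀ #X := by
      gcongr
      · exact (mk_le_mk_of_subset fun F hF => hF.1).trans (mk_setOf_finset_subset_le X)
      · exact ciSup_le' fun F => (le_aleph0_iff_set_countable.2 (hthrough F F.2.2)).trans hM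
    _ = max ℵ₀ #X := mul_eq_self hM

theorem mk_edgeClosure_le (hcount : ∀ E ∈ 𝓔, E.Countable) (X : Set α) :
    #(edgeClosure 𝓔 k X) ≤ max ℵ₀ #X := by
  set M := max ℵ₀ #X
  have hM : ℵ₀ ≤ M := le_max_left _ _
  have hstep : ∀ Y : Set α, #Y ≤ M → #(Y ∪ ⋃₀ edgesMeeting 𝓔 k Y : Set α) ≤ M := fun Y hY =>
    calc #(Y ∪ ⋃₀ edgesMeeting 𝓔 k Y : Set α) ≤ #Y + #(edgesMeeting 𝓔 k Y) * ℵ₀ := by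
          grw [mk_union_le, mk_sUnion_le]
          gcongr
          exact ciSup_le' fun E => le_aleph0_iff_set_countable.2 (hcount E E.2.1)
      _ ≤ M + M * M := by
          gcongr
          exact (mk_edgesMeeting_le hthrough Y).trans (max_le hM hY)
      _ = M := by rw [mul_eq_self hM, add_eq_self hM]
  have hiter : ∀ n, #((fun Y => Y ∪ ⋃₀ edgesMeeting 𝓔 k Y)^[n] X) ≤ M := fun n => by
    induction n with
    | zero => exact le_max_right _ _
    | succ n ih => rw [Function.iterate_succ_apply']; exact hstep _ ih
  rw [← lift_le.{0}]
  calc lift.{0} #(edgeClosure 𝓔 k X) ≤ lift.{u} #ℕ * ⨆ n, lift.{0} #(_ : Set α) :=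
        mk_iUnion_le_lift _
    _ ≤ lift.{0} M * lift.{0} M := by
      gcongr
      · simpa using hM
      · exact ciSup_le' fun n => lift_le.2 (hiter n)
    _ = lift.{0} M := by rw [← lift_mul, mul_eq_self hM]

end Closure

theorem exists_injOn_mapsTo_Iio_ord (V : Set α) :
    ∃ ι : α → Ordinal.{u}, InjOn ι V ∧ MapsTo ι V (Iio (#V).ord) := by
  classical
  obtain ⟨g⟩ : Nonempty (V ≃ Iio (#V).ord) :=
    ⟨(Cardinal.eq.1 (mk_ord_toType _).symm).some.trans Ordinal.ToType.mk.symm.toEquiv⟩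
  refine ⟨fun v => if h : v ∈ V then (g ⟨v, h⟩ : Ordinal.{u}) else 0,
    fun x hx y hy hxy => ?_, fun v hv => ?_⟩
  · simp only [hx, hy, dif_pos] at hxy
    simpa using g.injective (Subtype.ext hxy)
  · simp [hv]

section Filtration

variable {𝓔 : Set (Set α)} {k : ℕ}

theorem exists_filtration (hthrough : ∀ F : Finset α, F.card = k → {E ∈ 𝓔 | ↑F ⊆ E}.Countable)
    (hcount : ∀ E ∈ 𝓔, E.Countable) (hμ : ℵ₀ < #(⋃₀ 𝓔)) :
    ∃ S : Ordinal.{u} → Set α, Monotone S ∧ (∀ γ, ∀ E ∈ edgesMeeting 𝓔 k (S γ), E ⊆ S γ) ∧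
      (∀ γ < (#(⋃₀ 𝓔)).ord, #(S γ) < #(⋃₀ 𝓔)) ∧
      ∀ v ∈ ⋃₀ 𝓔, ∃ γ < (#(⋃₀ 𝓔)).ord, v ∈ S γ := by
  obtain ⟨ι, hinj, hmaps⟩ := exists_injOn_mapsTo_Iio_ord (⋃₀ 𝓔)
  refine ⟨fun γ => edgeClosure 𝓔 k {v ∈ ⋃₀ 𝓔 | ι v ≤ γ},
    fun β γ h => edgeClosure_mono fun v hv => ⟨hv.1, hv.2.trans h⟩,
    fun γ E hE => subset_edgeClosure_of_mem_edgesMeeting hE, fun γ hγ => ?_,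
    fun v hv => ⟨ι v, hmaps hv, subset_edgeClosure _ ⟨hv, le_rfl⟩⟩⟩
  refine (mk_edgeClosure_le hthrough hcount _).trans_lt (max_lt hμ ?_)
  have hinit : lift.{u + 1} #{v ∈ ⋃₀ 𝓔 | ι v ≤ γ} ≤ lift.{u} #(Iio (Order.succ γ)) :=
    lift_mk_le_lift_mk_of_injective (f := fun v => ⟨ι v, Order.lt_succ_iff.2 v.2.2⟩)
      fun x y h => Subtype.ext (hinj x.2.1 y.2.1 (congrArg Subtype.val h))
  rw [mk_Iio_ordinal, lift_lift, lift_le] at hinit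
  exact hinit.trans_lt (lt_ord.1 ((isSuccLimit_ord hμ.le).succ_lt hγ))

noncomputable def entryLevel (S : Ordinal.{u} → Set α) (v : α) : Ordinal.{u} :=
  sInf {γ | v ∈ S γ}

variable {S : Ordinal.{u} → Set α} {v : α} {γ : Ordinal.{u}}

theorem mem_entryLevel (h : v ∈ S γ) : v ∈ S (entryLevel S v) :=
  csInf_mem (s := {γ | v ∈ S γ}) ⟨γ, h⟩

theorem entryLevel_le (h : v ∈ S γ) : entryLevel S v ≤ γ := csInf_le' h

theorem exists_isGreatest_entryLevel (hk : k ≠ 0) (hS : Monotone S)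
    (hclosed : ∀ γ, ∀ E ∈ edgesMeeting 𝓔 k (S γ), E ⊆ S γ) {E : Set α} (hinf : E.Infinite)
    {γ₀ : Ordinal.{u}} (hγ₀ : E ∈ edgesMeeting 𝓔 k (S γ₀)) :
    ∃ γ ≤ γ₀, E ⊆ S γ ∧ IsGreatest (entryLevel S '' E) γ ∧
      (E ∩ entryLevel S ⁻¹' {γ}).Infinite := by
  set γ := sInf {γ | E ∈ edgesMeeting 𝓔 k (S γ)}
  have hγ : E ∈ edgesMeeting 𝓔 k (S γ) :=
    csInf_mem (s := {γ | E ∈ edgesMeeting 𝓔 k (S γ)}) ⟨γ₀, hγ₀⟩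
  have hsub : E ⊆ S γ := hclosed γ E hγ
  have hle : ∀ v ∈ E, entryLevel S v ≤ γ := fun v hv => entryLevel_le (hsub hv)
  -- otherwise `k` of these points would lie in a stage before `γ`
  have hlow : {v ∈ E | entryLevel S v < γ}.Finite := by
    by_contra hlow
    obtain ⟨F, hF, hcard⟩ := Set.Infinite.exists_subset_card_eq hlow k
    have hFne : F.Nonempty := Finset.card_pos.1 (by omega)
    refine notMem_of_lt_csInf' ((Finset.sup'_lt_iff hFne).2 fun v hv => (hF hv).2)
      ⟨hγ.1, F, fun v hv => ⟨(hF hv).1, hS (Finset.le_sup' _ hv) ?_⟩, hcard⟩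
    exact mem_entryLevel (hsub (hF hv).1)
  have htop : (E ∩ entryLevel S ⁻¹' {γ}).Infinite := (hinf.sdiff hlow).mono
    fun v hv => ⟨hv.1, (hle v hv.1).eq_of_not_lt fun h => hv.2 ⟨hv.1, h⟩⟩
  obtain ⟨v, hv, hvγ⟩ := htop.nonempty
  exact ⟨γ, csInf_le' hγ₀, hsub, ⟨⟨v, hv, hvγ⟩, by rintro _ ⟨w, hw, rfl⟩; exact hle w hw⟩, htop⟩

theorem hasMaxRank_of_forall_lt {r : ℕ} (hk : k ≠ 0) (hcount : ∀ E ∈ 𝓔, E.Countable)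
    (hinf : ∀ E ∈ 𝓔, E.Infinite) (hC : HasPropC 𝓔 r k) (hμ : ℵ₀ < #(⋃₀ 𝓔))
    (IH : ∀ 𝓕 : Set (Set α), #(⋃₀ 𝓕) < #(⋃₀ 𝓔) → (∀ E ∈ 𝓕, E.Countable) →
      (∀ E ∈ 𝓕, E.Infinite) → HasPropC 𝓕 r k → HasMaxRank 𝓕) :
    HasMaxRank 𝓔 := by
  obtain ⟨S, hS, hclosed, hcard, hcover⟩ :=
    exists_filtration (fun F hF => (hC.finite_setOf_subset F hF).countable) hcount hμ
  have hlevel : ∀ E ∈ 𝓔, ∃ γ < (#(⋃₀ 𝓔)).ord, E ⊆ S γ ∧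
      IsGreatest (entryLevel S '' E) γ ∧ (E ∩ entryLevel S ⁻¹' {γ}).Infinite := by
    intro E hE
    obtain ⟨F, hFE, hFcard⟩ := (hinf E hE).exists_subset_card_eq k
    have hFne : F.Nonempty := Finset.card_pos.1 (by omega)
    choose! β hβ hvβ using fun v (hv : v ∈ F) => hcover v ⟨E, hE, hFE hv⟩
    obtain ⟨γ, hγle, h⟩ := exists_isGreatest_entryLevel hk hS hclosed (hinf E hE)
      (γ₀ := F.sup' hFne β) ⟨hE, F, fun v hv => ⟨hFE hv, hS (F.le_sup' β hv) (hvβ v hv)⟩, hFcard⟩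
    exact ⟨γ, hγle.trans_lt ((Finset.sup'_lt_iff hFne).2 hβ), h⟩
  refine HasMaxRank.of_levels (entryLevel S) fun E hE => ?_
  obtain ⟨γ, hγ, -, hgreat, -⟩ := hlevel E hE
  refine ⟨γ, hgreat, IH _ ((mk_le_mk_of_subset ?_).trans_lt (hcard γ hγ)) ?_ ?_
    ((hC.anti (sep_subset _ _)).image _ fun _ _ => inter_subset_left)⟩
  · rintro v ⟨_, ⟨E', ⟨hE', hgreat'⟩, rfl⟩, hv⟩
    obtain ⟨γ', -, hsub', hgreat'', -⟩ := hlevel E' hE'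
    exact hgreat'.unique hgreat'' ▸ hsub' hv.1
  · rintro _ ⟨E', ⟨hE', -⟩, rfl⟩
    exact (hcount E' hE').mono inter_subset_left
  · rintro _ ⟨E', ⟨hE', hgreat'⟩, rfl⟩
    obtain ⟨γ', -, -, hgreat'', hinf'⟩ := hlevel E' hE'
    rwa [hgreat'.unique hgreat'']

end Filtration

theorem hasMaxRank_of_hasPropC {r k : ℕ} (hk : k ≠ 0) (𝓔 : Set (Set α))
    (hcount : ∀ E ∈ 𝓔, E.Countable) (hinf : ∀ E ∈ 𝓔, E.Infinite) (hC : HasPropC 𝓔 r k) :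
    HasMaxRank 𝓔 := by
  obtain ⟨μ, hμ⟩ : ∃ μ, #(⋃₀ 𝓔) = μ := ⟨_, rfl⟩
  induction μ using WellFoundedLT.induction generalizing 𝓔 with
  | _ μ IH =>
  subst hμ
  rcases le_or_gt #(⋃₀ 𝓔) ℵ₀ with hle | hlt
  · have hthrough F hF := (hC.finite_setOf_subset F hF).countable
    have h𝓔 : 𝓔 ⊆ edgesMeeting 𝓔 k (⋃₀ 𝓔) := fun E hE =>
      have ⟨F, hFE, hFcard⟩ := (hinf E hE).exists_subset_card_eq k
      ⟨hE, F, subset_inter hFE (hFE.trans (subset_sUnion_of_mem hE)), hFcard⟩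
    refine hasMaxRank_of_countable r 𝓔 (le_aleph0_iff_set_countable.1 ?_) hinf
      (hC.mono r.le_succ natCast_lt_aleph0.le)
    exact (mk_le_mk_of_subset h𝓔).trans ((mk_edgesMeeting_le hthrough _).trans (max_le le_rfl hle))
  · exact hasMaxRank_of_forall_lt hk hcount hinf hC hlt
      fun 𝓕 h𝓕 hc hi hC' => IH _ h𝓕 𝓕 hc hi hC' rfl

theorem minVC_countable_edges_general {α : Type u}
    (r k : ℕ)
    (𝓔 : Set (Set α)) (hspec : ∀ E ∈ 𝓔, #E = ℵ₀)
    (hC : HasPropC 𝓔 r k) :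
    HasMinVC 𝓔 := by
  have hC' : HasPropC 𝓔 r (k + 1 : ℕ) := hC.mono le_rfl (by exact_mod_cast k.le_succ)
  refine (hasMaxRank_of_hasPropC k.succ_ne_zero 𝓔 (fun E hE => ?_) (fun E hE => ?_) hC').hasMinVC
  · exact le_aleph0_iff_set_countable.1 (hspec E hE).le
  · exact infinite_coe_iff.1 (aleph0_le_mk_iff.1 (hspec E hE).ge)

/-- For every infinite cardinal `lam` and all `r, k ∈ ω`, every hypergraph
`𝓔 ⊆ [lam]^ω` possessing property C(r,k) has a minimal vertex cover. -/
theorem minVC_countable_edges {α : Type u}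
    (lam : Cardinal.{u}) (hlam : ℵ₀ ≤ lam) (hα : #α = lam)
    (r k : ℕ)
    (𝓔 : Set (Set α)) (hspec : ∀ E ∈ 𝓔, #E = ℵ₀)
    (hC : HasPropC 𝓔 r k) :
    HasMinVC 𝓔 :=
  minVC_countable_edges_general r k 𝓔 hspec hC
end

section
/- Assume GCH. Then for all cardinals κ, λ with ω₂ ≤ κ ≤ λ, every hypergraph 𝓔 ⊆ [λ]^κ (i.e., every edge is a subset of λ of cardinality κ) possessing property C(2,ω) has a maximizing well-ordering. -/
open Cardinal Set

universe u

/-!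
Call a ranking of an almost disjoint family `𝓐` of `κ`-sets (pairwise intersections finite)
*sparse* relative to `X` if every edge meets `X` together with all earlier edges in fewer than
`κ` points. For `X = ∅` every edge then has a point outside all earlier edges, and ranking each
such point above the rest of its edge gives a maximizing well-ordering.

Sparse rankings are built by induction on `#𝓐`. A family with `#𝓐 ≤ κ` is enumerated in order
type `#𝓐`. A larger family is covered by an increasing chain of subfamilies `B i` of size
`< #𝓐`, each *countably closed*: every edge outside `B i` meets `⋃₀ B i` in a countable set. An
edge entering the chain at stage `i` therefore meets the earlier stages in the union of a chain of
countable sets, which has at most `ℵ₁ < κ` points; so the induction hypothesis applies to each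
stage, with `X` enlarged by the earlier stages, and the stage rankings are concatenated
lexicographically.

Countably closed families of size `≤ max #S κ` around `S` arise from `ω₂` rounds of absorbing
every edge that meets the current union uncountably; as `ℵ₂` is regular, an edge meeting the
final union uncountably already does so at some round. GCH bounds each round: an almost disjoint
family of uncountable subsets of `W` has at most `#W` members, since each member contains a
countably infinite set that is bounded in a well-order of `W` of type `#W`, and under GCH there
are only `#W` such bounded sets.
-/

open Order Function

theorem mk_le_of_forall_mk_lt {β : Type u} (r : β → β → Prop) [IsWellOrder β r]
    {c : Cardinal.{u}} (h : ∀ x, #{y // r y x} < c) : #β ≤ c := by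
  by_contra! hc
  obtain ⟨x, hx⟩ := Ordinal.typein_surj r ((ord_lt_ord.2 hc).trans_le (ord_le_type r))
  simpa [← Ordinal.card_typein, hx] using h x

theorem mk_iUnion_le_succ_of_monotone {α : Type u} {J : Type*} [LinearOrder J]
    [WellFoundedLT J] {V : J → Set α} (hV : Monotone V) {μ : Cardinal.{u}}
    (h : ∀ j, #(V j) ≤ μ) : #(⋃ j, V j) ≤ succ μ := by
  -- Well-order the union by the stage at which a point appears: every proper initial segment
  -- then lies in a single `V j`.
  choose stage hstage using fun x : ⋃ j, V j => mem_iUnion.1 x.2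
  let key : (⋃ j, V j) → J × (⋃ j, V j) := fun x => (stage x, x)
  let r := InvImage (Prod.Lex (· < ·) WellOrderingRel) key
  have : IsWellOrder _ r :=
    (RelEmbedding.preimage ⟨key, fun x y hxy => congrArg Prod.snd hxy⟩ _).isWellOrder
  refine mk_le_of_forall_mk_lt r fun x => lt_succ_iff.2 ((mk_le_of_injective
    (f := fun y : {y // r y x} => (⟨y.1, hV ?_ (hstage y.1)⟩ : V (stage x)))
    fun y z hyz => Subtype.ext (Subtype.ext (Subtype.ext_iff.1 hyz :))).trans (h _))
  rcases Prod.lex_iff.1 y.2 with hlt | ⟨heq, -⟩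
  exacts [hlt.le, heq.le]

theorem mk_iUnion_le_of_le {α ι : Type u} {f : ι → Set α} {σ : Cardinal.{u}} (hσ : ℵ₀ ≤ σ)
    (hι : #ι ≤ σ) (hf : ∀ i, #(f i) ≤ σ) : #(⋃ i, f i) ≤ σ :=
  (mk_iUnion_le f).trans ((mul_le_mul' hι (ciSup_le' hf)).trans (mul_eq_self hσ).le)

theorem exists_subset_of_mk_lt_cof {α J : Type u} [LinearOrder J] {V : J → Set α}
    (hV : Monotone V) {S : Set α} (hS : S ⊆ ⋃ j, V j) (h : #S < Order.cof J) :
    ∃ j, S ⊆ V j := by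
  choose stage hstage using fun x : S => mem_iUnion.1 (hS x.2)
  obtain ⟨j, hj⟩ := not_isCofinal_iff.1 fun hcof =>
    ((Order.cof_le hcof).trans mk_range_le).not_gt h
  exact ⟨j, fun x hx => hV (hj _ ⟨⟨x, hx⟩, rfl⟩).le (hstage ⟨x, hx⟩)⟩

theorem exists_ordinal_rank {β : Type u} {K : Type*} [LinearOrder K] [WellFoundedLT K]
    (𝓐 : Set β) (k : 𝓐 → K) (hk : Injective k) :
    ∃ ρ : β → Ordinal.{u}, InjOn ρ 𝓐 ∧
      ∀ E (hE : E ∈ 𝓐) F (hF : F ∈ 𝓐), ρ F < ρ E → k ⟨F, hF⟩ < k ⟨E, hE⟩ := by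
  classical
  let r : 𝓐 → 𝓐 → Prop := InvImage (· < ·) k
  have : IsWellOrder 𝓐 r := (RelEmbedding.preimage ⟨k, hk⟩ (· < ·)).isWellOrder
  refine ⟨fun E => if h : E ∈ 𝓐 then Ordinal.typein r ⟨E, h⟩ else 0,
    fun E hE F hF hEF => ?_, fun E hE F hF hFE => ?_⟩
  · simp only [dif_pos hE, dif_pos hF] at hEF
    exact congrArg Subtype.val (Ordinal.typein_injective r hEF)
  · simp only [dif_pos hE, dif_pos hF] at hFE
    exact (Ordinal.typein_lt_typein r).1 hFE

theorem succ_aleph_one : succ ℵ₁ = aleph 2 := by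
  rw [succ_aleph]; norm_num

def GCH : Prop := ∀ μ : Cardinal.{u}, ℵ₀ ≤ μ → 2 ^ μ = succ μ

theorem power_aleph0_le_of_lt (hGCH : GCH.{u}) {ν μ : Cardinal.{u}} (hνμ : ν < μ)
    (hμ : ℵ₀ < μ) : ν ^ ℵ₀ ≤ μ := by
  set d := max ν ℵ₀
  have hd : ℵ₀ ≤ d := le_max_right _ _
  calc ν ^ ℵ₀ ≤ (2 ^ d) ^ ℵ₀ := power_le_power_right ((le_max_left _ _).trans (cantor d).le)
    _ = 2 ^ d := by rw [← power_mul, mul_aleph0_eq hd]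
    _ = succ d := hGCH d hd
    _ ≤ μ := succ_le_of_lt (max_lt hνμ hμ)

theorem mk_le_of_pairwise_finite_inter (hGCH : GCH.{u}) {β : Type u} (𝓣 : Set (Set β))
    (hunc : ∀ T ∈ 𝓣, ¬ T.Countable) (hfin : 𝓣.Pairwise fun T T' => (T ∩ T').Finite) :
    #𝓣 ≤ #β := by
  rcases 𝓣.eq_empty_or_nonempty with rfl | ⟨T₀, hT₀⟩
  · simp
  have hβ : ℵ₀ < #β := by
    by_contra! h
    exact hunc T₀ hT₀ (le_aleph0_iff_set_countable.1 ((mk_set_le T₀).trans h))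
  obtain ⟨r, _, hr⟩ := exists_ord_eq β
  let 𝓒 : β → Set (Set β) := fun x => {C | C ⊆ {y | r y x} ∧ #C ≤ ℵ₀}
  have hbounded : ∀ T : 𝓣, ∃ C ∈ ⋃ x, 𝓒 x, C ⊆ T ∧ ℵ₀ ≤ #C := by
    rintro ⟨T, hT⟩
    obtain ⟨x, hx⟩ : ∃ x : T, ℵ₀ ≤ #{y // Subrel r (· ∈ T) y x} := by
      by_contra! h
      exact hunc T hT (le_aleph0_iff_set_countable.1 (mk_le_of_forall_mk_lt _ h))
    have hseg : ℵ₀ ≤ #(T ∩ {y | r y x} : Set β) := hx.trans (mk_le_of_injective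
      (f := fun y => ⟨y.1.1, y.1.2, y.2⟩)
      fun y z hyz => Subtype.ext (Subtype.ext (Subtype.ext_iff.1 hyz :)))
    obtain ⟨C, hC, hCcard⟩ := le_mk_iff_exists_subset.1 hseg
    exact ⟨C, mem_iUnion.2 ⟨x, fun y hy => (hC hy).2, hCcard.le⟩,
      fun y hy => (hC hy).1, hCcard.ge⟩
  choose C hC𝓒 hCT hCinf using hbounded
  have hCinj : Injective fun T : 𝓣 => (⟨C T, hC𝓒 T⟩ : ⋃ x, 𝓒 x) := by
    intro T T' hTT'
    by_contra hne
    refine (hCinf T).not_gt (lt_aleph0_iff_set_finite.2 ((hfin T.2 T'.2 ?_).subset ?_))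
    · exact fun h => hne (Subtype.ext h)
    · exact subset_inter (hCT T) ((congrArg Subtype.val hTT').trans_subset (hCT T'))
  refine (mk_le_of_injective hCinj).trans (mk_iUnion_le_of_le hβ.le le_rfl fun x => ?_)
  exact (mk_bounded_subset_le _ _).trans
    (power_aleph0_le_of_lt hGCH (max_lt (card_typein_lt x hr) hβ) hβ)

section Closure

variable {α : Type u} {𝓐 : Set (Set α)}

theorem mk_setOf_not_countable_inter_le (hGCH : GCH.{u})
    (hfin : 𝓐.Pairwise fun E F => (E ∩ F).Finite) (W : Set α) :
    #{E ∈ 𝓐 | ¬ (E ∩ W).Countable} ≤ #W := by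
  let trace : Set α → Set W := fun E => (↑) ⁻¹' E
  have htrace : ∀ E, ((↑) '' trace E : Set α) = E ∩ W := fun E => by
    rw [Subtype.image_preimage_coe, inter_comm]
  have hinj : InjOn trace {E ∈ 𝓐 | ¬ (E ∩ W).Countable} := by
    intro E hE F hF hEF
    by_contra hne
    have hEW : E ∩ W = F ∩ W := by rw [← htrace, hEF, htrace]
    exact hE.2 ((hfin hE.1 hF.1 hne).subset
      (subset_inter inter_subset_left (hEW ▸ inter_subset_left))).countable
  rw [← mk_image_eq_of_injOn _ _ hinj]
  refine mk_le_of_pairwise_finite_inter hGCH _ ?_ ?_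
  · rintro _ ⟨E, hE, rfl⟩ hcount
    exact hE.2 (htrace E ▸ hcount.image _)
  · rintro _ ⟨E, hE, rfl⟩ _ ⟨F, hF, rfl⟩ hne
    exact (hfin hE.1 hF.1 fun h => hne (h ▸ rfl)).preimage (f := ((↑) : W → α))
      Subtype.val_injective.injOn

def IsCountablyClosed (𝓐 D : Set (Set α)) : Prop :=
  ∀ E ∈ 𝓐, E ∉ D → (E ∩ ⋃₀ D).Countable

def absorb (𝓐 D : Set (Set α)) : Set (Set α) :=
  D ∪ {E ∈ 𝓐 | ¬ (E ∩ ⋃₀ D).Countable}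

theorem absorb_subset {D : Set (Set α)} (hD : D ⊆ 𝓐) : absorb 𝓐 D ⊆ 𝓐 :=
  union_subset hD fun _ hE => hE.1

theorem mk_absorb_le (hGCH : GCH.{u}) {κ : Cardinal.{u}} (hκ : ℵ₀ ≤ κ)
    (h𝓐 : ∀ E ∈ 𝓐, #E ≤ κ) (hfin : 𝓐.Pairwise fun E F => (E ∩ F).Finite)
    {D : Set (Set α)} (hD : D ⊆ 𝓐) : #(absorb 𝓐 D) ≤ max #D κ := by
  have hU : #(⋃₀ D) ≤ max #D κ :=
    (mk_sUnion_le D).trans ((mul_le_mul_right (ciSup_le' fun F => h𝓐 _ (hD F.2)) _).trans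
      (mul_le_max_of_aleph0_le_right hκ))
  calc #(absorb 𝓐 D) ≤ #D + #{E ∈ 𝓐 | ¬ (E ∩ ⋃₀ D).Countable} := mk_union_le _ _
    _ ≤ max #D κ + max #D κ :=
      add_le_add (le_max_left _ _) ((mk_setOf_not_countable_inter_le hGCH hfin _).trans hU)
    _ = max #D κ := add_eq_self (hκ.trans (le_max_right _ _))

theorem isCountablyClosed_iUnion {I : Type u} [LinearOrder I] [NoMaxOrder I]
    {C : I → Set (Set α)} (hC : Monotone C) (habsorb : ∀ i j, i < j → absorb 𝓐 (C i) ⊆ C j)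
    (hcof : ℵ₁ < Order.cof I) : IsCountablyClosed 𝓐 (⋃ i, C i) := by
  intro E hE hEC
  by_contra hunc
  have hℵ₁ : ℵ₁ ≤ #(E ∩ ⋃₀ ⋃ i, C i : Set α) := by
    rw [← succ_aleph0]
    exact succ_le_of_lt (not_le.1 (mt le_aleph0_iff_set_countable.1 hunc))
  obtain ⟨P, hPE, hP⟩ := le_mk_iff_exists_subset.1 hℵ₁
  obtain ⟨i, hi⟩ := exists_subset_of_mk_lt_cof (V := fun i => ⋃₀ C i)
    (fun i j h => sUnion_mono (hC h))
    (by simpa only [sUnion_iUnion] using hPE.trans inter_subset_right) (hP ▸ hcof)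
  obtain ⟨j, hij⟩ := exists_gt i
  refine hEC (mem_iUnion.2 ⟨j, habsorb i j hij (Or.inr ⟨hE, fun hcount => ?_⟩)⟩)
  have := le_aleph0_iff_set_countable.2
    (hcount.mono (subset_inter (hPE.trans inter_subset_left) hi))
  exact aleph0_lt_aleph_one.not_ge (hP ▸ this)

theorem exists_absorbing_chain (hGCH : GCH.{u}) {κ : Cardinal.{u}} (hκ : aleph 2 ≤ κ)
    (h𝓐 : ∀ E ∈ 𝓐, #E ≤ κ) (hfin : 𝓐.Pairwise fun E F => (E ∩ F).Finite)
    {S : Set (Set α)} (hS : S ⊆ 𝓐) :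
    ∃ C : (aleph.{u} 2).ord.ToType → Set (Set α), Monotone C ∧
      (∀ i j, i < j → absorb 𝓐 (C i) ⊆ C j) ∧
      ∀ i, S ⊆ C i ∧ C i ⊆ 𝓐 ∧ #(C i) ≤ max #S κ := by
  set σ := max #S κ
  have hℵ₂σ : aleph 2 ≤ σ := hκ.trans (le_max_right _ _)
  have hσ : ℵ₀ ≤ σ := (aleph0_le_aleph 2).trans hℵ₂σ
  let C : (aleph.{u} 2).ord.ToType → Set (Set α) :=
    WellFoundedLT.fix fun i C => S ∪ ⋃ j : Iio i, absorb 𝓐 (C j j.2)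
  have hC : ∀ i, C i = S ∪ ⋃ j : Iio i, absorb 𝓐 (C j) := WellFoundedLT.fix_eq _
  have absorb_subset_C : ∀ i j, i < j → absorb 𝓐 (C i) ⊆ C j := fun i j h E hE => by
    rw [hC j]
    exact Or.inr (mem_iUnion.2 ⟨⟨i, h⟩, hE⟩)
  refine ⟨C, fun i j hij => ?_, absorb_subset_C, fun i => ?_⟩
  · rw [hC i]
    refine union_subset ?_ (iUnion_subset fun k => absorb_subset_C _ _ (k.2.trans_le hij))
    rw [hC j]
    exact subset_union_left
  induction i using WellFoundedLT.induction with | _ i ih =>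
  rw [hC]
  refine ⟨subset_union_left, union_subset hS (iUnion_subset fun j => absorb_subset (ih j j.2).2.1),
    (mk_union_le _ _).trans ((add_le_add (le_max_left _ _) ?_).trans (add_eq_self hσ).le)⟩
  refine mk_iUnion_le_of_le hσ ((mk_set_le _).trans ((mk_ord_toType _).trans_le hℵ₂σ))
    fun j => ?_
  exact (mk_absorb_le hGCH hσ (fun E hE => (h𝓐 E hE).trans (le_max_right _ _)) hfin
    (ih j j.2).2.1).trans (max_le (ih j j.2).2.2 le_rfl)

theorem exists_isCountablyClosed_superset (hGCH : GCH.{u}) {κ : Cardinal.{u}}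
    (hκ : aleph 2 ≤ κ) (h𝓐 : ∀ E ∈ 𝓐, #E ≤ κ)
    (hfin : 𝓐.Pairwise fun E F => (E ∩ F).Finite) {S : Set (Set α)} (hS : S ⊆ 𝓐) :
    ∃ D, S ⊆ D ∧ D ⊆ 𝓐 ∧ IsCountablyClosed 𝓐 D ∧ #D ≤ max #S κ := by
  obtain ⟨C, hCmono, hCabsorb, hC⟩ := exists_absorbing_chain hGCH hκ h𝓐 hfin hS
  have : NoMaxOrder (aleph.{u} 2).ord.ToType := Cardinal.noMaxOrder (aleph0_le_aleph 2)
  obtain ⟨i₀⟩ := nonempty_ord_toType (aleph_pos 2).ne'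
  have hℵ₂ : aleph 2 ≤ max #S κ := hκ.trans (le_max_right _ _)
  refine ⟨⋃ i, C i, (hC i₀).1.trans (subset_iUnion C i₀), iUnion_subset fun i => (hC i).2.1,
    isCountablyClosed_iUnion hCmono hCabsorb ?_, mk_iUnion_le_of_le
      ((aleph0_le_aleph 2).trans hℵ₂) ((mk_ord_toType _).trans_le hℵ₂) fun i => (hC i).2.2⟩
  rw [Ordinal.cof_toType, ← succ_aleph_one, (isRegular_succ (aleph0_le_aleph 1)).cof_ord]
  exact lt_succ _

/-- Countably closed families are closed under intersections, so this is the least countably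
closed subfamily containing `S`; unlike an arbitrary choice of one, it is monotone in `S`. -/
def countableClosure (𝓐 S : Set (Set α)) : Set (Set α) :=
  ⋂₀ {D | S ⊆ D ∧ D ⊆ 𝓐 ∧ IsCountablyClosed 𝓐 D}

theorem subset_countableClosure (S : Set (Set α)) : S ⊆ countableClosure 𝓐 S :=
  subset_sInter fun _ hD => hD.1

theorem countableClosure_subset {S : Set (Set α)} (hS : S ⊆ 𝓐) :
    countableClosure 𝓐 S ⊆ 𝓐 :=
  sInter_subset_of_mem ⟨hS, subset_rfl, fun _ hE hE' => (hE' hE).elim⟩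

theorem countableClosure_mono {S T : Set (Set α)} (h : S ⊆ T) :
    countableClosure 𝓐 S ⊆ countableClosure 𝓐 T :=
  sInter_subset_sInter fun _ hD => ⟨h.trans hD.1, hD.2⟩

theorem isCountablyClosed_countableClosure (S : Set (Set α)) :
    IsCountablyClosed 𝓐 (countableClosure 𝓐 S) := by
  intro E hE hES
  obtain ⟨D, hSD, hD𝓐, hD, hED⟩ : ∃ D, S ⊆ D ∧ D ⊆ 𝓐 ∧ IsCountablyClosed 𝓐 D ∧ E ∉ D := by
    simpa [countableClosure] using hES
  exact (hD E hE hED).mono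
    (inter_subset_inter_right _ (sUnion_mono (sInter_subset_of_mem ⟨hSD, hD𝓐, hD⟩)))

theorem mk_countableClosure_le (hGCH : GCH.{u}) {κ : Cardinal.{u}} (hκ : aleph 2 ≤ κ)
    (h𝓐 : ∀ E ∈ 𝓐, #E ≤ κ) (hfin : 𝓐.Pairwise fun E F => (E ∩ F).Finite)
    {S : Set (Set α)} (hS : S ⊆ 𝓐) : #(countableClosure 𝓐 S) ≤ max #S κ := by
  obtain ⟨D, hSD, hD𝓐, hD, hDS⟩ := exists_isCountablyClosed_superset hGCH hκ h𝓐 hfin hS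
  have hclD : countableClosure 𝓐 S ⊆ D := sInter_subset_of_mem ⟨hSD, hD𝓐, hD⟩
  exact (mk_le_mk_of_subset hclD).trans hDS

end Closure

section Ranking

variable {α : Type u}

def IsSparseRanking (κ : Cardinal.{u}) (X : Set α) (𝓐 : Set (Set α))
    (ρ : Set α → Ordinal.{u}) : Prop :=
  InjOn ρ 𝓐 ∧ ∀ E ∈ 𝓐, #(E ∩ (X ∪ ⋃₀ {F ∈ 𝓐 | ρ F < ρ E}) : Set α) < κ

theorem mk_inter_union_lt {κ : Cardinal.{u}} (hκ : ℵ₀ ≤ κ) {E X Y : Set α}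
    (hX : #(E ∩ X : Set α) < κ) (hY : #(E ∩ Y : Set α) < κ) :
    #(E ∩ (X ∪ Y) : Set α) < κ := by
  rw [inter_union_distrib_left]
  exact (mk_union_le _ _).trans_lt (add_lt_of_lt hκ hX hY)

theorem mk_inter_sUnion_le {E : Set α} {P : Set (Set α)} (h : ∀ F ∈ P, (E ∩ F).Finite) :
    #(E ∩ ⋃₀ P : Set α) ≤ #P * ℵ₀ := by
  rw [sUnion_eq_iUnion, inter_iUnion]
  exact (mk_iUnion_le _).trans
    (mul_le_mul_right (ciSup_le' fun F : P => (lt_aleph0_iff_set_finite.2 (h F F.2)).le) _)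

theorem exists_isSparseRanking_of_mk_le {κ : Cardinal.{u}} (hκ : ℵ₀ < κ) {X : Set α}
    {𝓐 : Set (Set α)} (h𝓐 : #𝓐 ≤ κ) (hfin : 𝓐.Pairwise fun E F => (E ∩ F).Finite)
    (hX : ∀ E ∈ 𝓐, #(E ∩ X : Set α) < κ) : ∃ ρ, IsSparseRanking κ X 𝓐 ρ := by
  obtain ⟨e⟩ : Nonempty (𝓐 ≃ (#𝓐).ord.ToType) := Cardinal.eq.1 (mk_ord_toType _).symm
  obtain ⟨ρ, hinj, hlt⟩ := exists_ordinal_rank 𝓐 e e.injective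
  refine ⟨ρ, hinj, fun E hE => mk_inter_union_lt hκ.le (hX E hE) ?_⟩
  have hearlier : #{F ∈ 𝓐 | ρ F < ρ E} < κ := by
    have hIio : #(Iio (e ⟨E, hE⟩)) < #𝓐 := (mk_Iio_lt _ (by simp)).trans_eq (mk_ord_toType _)
    refine lt_of_le_of_lt ?_ (hIio.trans_le h𝓐)
    refine mk_le_of_injective (f := fun F => ⟨e ⟨F, F.2.1⟩, hlt E hE F F.2.1 F.2.2⟩) ?_
    intro F G hFG
    have hFG' := e.injective (Subtype.ext_iff.1 hFG)
    rw [Subtype.mk.injEq] at hFG'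
    exact Subtype.ext hFG'
  have hfinE : ∀ F ∈ {F ∈ 𝓐 | ρ F < ρ E}, (E ∩ F).Finite := fun F hF =>
    hfin hE hF.1 fun h => hF.2.ne (congrArg ρ h.symm)
  exact (mk_inter_sUnion_le hfinE).trans_lt (mul_lt_of_lt hκ.le hearlier hκ)

theorem exists_isSparseRanking_of_blocks {I : Type*} [LinearOrder I] [WellFoundedLT I]
    {κ : Cardinal.{u}} {X : Set α} {𝓐 : Set (Set α)} (s : Set α → I)
    (ρ : I → Set α → Ordinal.{u})
    (hρ : ∀ i, IsSparseRanking κ (X ∪ ⋃₀ {F ∈ 𝓐 | s F < i}) {E ∈ 𝓐 | s E = i} (ρ i)) :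
    ∃ ρ', IsSparseRanking κ X 𝓐 ρ' := by
  let k : 𝓐 → I ×ₗ Ordinal.{u} := fun E => toLex (s E, ρ (s E) E)
  have hk : Injective k := by
    rintro ⟨E, hE⟩ ⟨F, hF⟩ h
    obtain ⟨hs, hρEF⟩ := Prod.ext_iff.1 (toLex.injective h)
    dsimp only at hs hρEF
    rw [hs] at hρEF
    exact Subtype.ext ((hρ (s F)).1 ⟨hE, hs⟩ ⟨hF, rfl⟩ hρEF)
  obtain ⟨ρ', hinj, hlt⟩ := exists_ordinal_rank 𝓐 k hk
  refine ⟨ρ', hinj, fun E hE => (mk_le_mk_of_subset ?_).trans_lt ((hρ (s E)).2 E ⟨hE, rfl⟩)⟩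
  rintro x ⟨hxE, hxX | ⟨F, ⟨hF, hFE⟩, hxF⟩⟩
  · exact ⟨hxE, Or.inl (Or.inl hxX)⟩
  rcases Prod.Lex.toLex_lt_toLex.1 (hlt E hE F hF hFE) with hsF | ⟨hsF, hρF⟩
  · exact ⟨hxE, Or.inl (Or.inr ⟨F, ⟨hF, hsF⟩, hxF⟩)⟩
  · dsimp only at hsF hρF
    exact ⟨hxE, Or.inr ⟨F, ⟨⟨hF, hsF⟩, hsF ▸ hρF⟩, hxF⟩⟩

theorem exists_isCountablyClosed_filtration (hGCH : GCH.{u}) {κ : Cardinal.{u}}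
    (hκ : aleph 2 ≤ κ) {𝓐 : Set (Set α)} (h𝓐 : ∀ E ∈ 𝓐, #E ≤ κ)
    (hfin : 𝓐.Pairwise fun E F => (E ∩ F).Finite) (hκ𝓐 : κ < #𝓐) :
    ∃ B : (#𝓐).ord.ToType → Set (Set α), Monotone B ∧ (∀ E ∈ 𝓐, ∃ i, E ∈ B i) ∧
      ∀ i, B i ⊆ 𝓐 ∧ IsCountablyClosed 𝓐 (B i) ∧ #(B i) < #𝓐 := by
  obtain ⟨e⟩ : Nonempty (𝓐 ≃ (#𝓐).ord.ToType) := Cardinal.eq.1 (mk_ord_toType _).symm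
  have : NoMaxOrder (#𝓐).ord.ToType :=
    Cardinal.noMaxOrder ((aleph0_le_aleph 2).trans (hκ.trans hκ𝓐.le))
  let A : (#𝓐).ord.ToType → Set (Set α) := fun i => (↑) '' (e ⁻¹' Iio i)
  have hA : ∀ i, A i ⊆ 𝓐 := fun i => Subtype.coe_image_subset _ _
  refine ⟨fun i => countableClosure 𝓐 (A i),
    fun i j hij => countableClosure_mono (image_mono (preimage_mono (Iio_subset_Iio hij))),
    fun E hE => ?_, fun i => ⟨countableClosure_subset (hA i),
      isCountablyClosed_countableClosure _, ?_⟩⟩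
  · obtain ⟨i, hi⟩ := exists_gt (e ⟨E, hE⟩)
    exact ⟨i, subset_countableClosure _ ⟨⟨E, hE⟩, hi, rfl⟩⟩
  · refine (mk_countableClosure_le hGCH hκ h𝓐 hfin (hA i)).trans_lt (max_lt ?_ hκ𝓐)
    calc #(A i) ≤ #(e ⁻¹' Iio i) := mk_image_le
      _ = #(Iio i) := mk_preimage_equiv _ _
      _ < #𝓐 := (mk_Iio_lt i (by simp)).trans_eq (mk_ord_toType _)

theorem mk_inter_iUnion_sUnion_le_aleph_one {I : Type*} [LinearOrder I] [WellFoundedLT I]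
    {𝓐 : Set (Set α)} {B : I → Set (Set α)} (hB : Monotone B)
    (hcl : ∀ i, IsCountablyClosed 𝓐 (B i)) {E : Set α} (hE : E ∈ 𝓐) {i : I}
    (hEi : ∀ j < i, E ∉ B j) : #(E ∩ ⋃ j : Iio i, ⋃₀ B j : Set α) ≤ ℵ₁ := by
  rw [inter_iUnion, ← succ_aleph0]
  exact mk_iUnion_le_succ_of_monotone (J := Iio i)
    (fun j k hjk => inter_subset_inter_right _ (sUnion_mono (hB hjk)))
    fun j => le_aleph0_iff_set_countable.2 (hcl j E hE (hEi j j.2))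

theorem exists_isSparseRanking (hGCH : GCH.{u}) {κ : Cardinal.{u}} (hκ : aleph 2 ≤ κ)
    {𝓐 : Set (Set α)} (h𝓐 : ∀ E ∈ 𝓐, #E = κ) (hfin : 𝓐.Pairwise fun E F => (E ∩ F).Finite)
    {X : Set α} (hX : ∀ E ∈ 𝓐, #(E ∩ X : Set α) < κ) : ∃ ρ, IsSparseRanking κ X 𝓐 ρ := by
  have hℵ₁κ : ℵ₁ < κ := (succ_aleph_one ▸ lt_succ ℵ₁).trans_le hκ
  have hℵ₀κ : ℵ₀ < κ := aleph0_lt_aleph_one.trans hℵ₁κ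
  obtain ⟨ν, hν⟩ : ∃ ν, #𝓐 = ν := ⟨_, rfl⟩
  induction ν using WellFoundedLT.induction generalizing 𝓐 X with | _ ν ih =>
  rcases le_or_gt #𝓐 κ with hsmall | hbig
  · exact exists_isSparseRanking_of_mk_le hℵ₀κ hsmall hfin hX
  obtain ⟨B, hBmono, hcover, hB⟩ := exists_isCountablyClosed_filtration hGCH hκ
    (fun E hE => (h𝓐 E hE).le) hfin hbig
  have := nonempty_ord_toType (pos_of_gt hbig).ne'
  have hstage : ∀ E ∈ 𝓐, ∃ i, E ∈ B i ∧ ∀ j < i, E ∉ B j := fun E hE => by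
    obtain ⟨i, hi, hmin⟩ := wellFounded_lt.has_min {i | E ∈ B i} (hcover E hE)
    exact ⟨i, hi, fun j hj hjE => hmin j hjE hj⟩
  choose! s hsB hsmin using hstage
  have hblock : ∀ i, ∃ ρ,
      IsSparseRanking κ (X ∪ ⋃₀ {F ∈ 𝓐 | s F < i}) {E ∈ 𝓐 | s E = i} ρ := by
    intro i
    refine ih _ ?_ (fun E hE => h𝓐 E hE.1) (hfin.mono fun E hE => hE.1) ?_ rfl
    · rw [← hν]
      exact (mk_le_mk_of_subset fun E hE => hE.2 ▸ hsB E hE.1).trans_lt (hB i).2.2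
    · rintro E ⟨hE, rfl⟩
      have hearlier : ⋃₀ {F ∈ 𝓐 | s F < s E} ⊆ ⋃ j : Iio (s E), ⋃₀ B j :=
        sUnion_subset fun F hF x hx => mem_iUnion.2 ⟨⟨s F, hF.2⟩, F, hsB F hF.1, hx⟩
      refine mk_inter_union_lt hℵ₀κ.le (hX E hE) ?_
      exact (mk_le_mk_of_subset (inter_subset_inter_right _ hearlier)).trans_lt
        ((mk_inter_iUnion_sUnion_le_aleph_one hBmono (fun j => (hB j).2.1) hE
          (hsmin E hE)).trans_lt hℵ₁κ)
  choose ρ hρ using hblock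
  exact exists_isSparseRanking_of_blocks s ρ hρ

end Ranking

section MaxWO

variable {α : Type u} {𝓔 : Set (Set α)}

theorem HasPropC.pairwise_finite_inter (hC : HasPropC 𝓔 2 ℵ₀) :
    𝓔.Pairwise fun E F => (E ∩ F).Finite := by
  intro E hE F hF hne
  have := hC {E, F} (by simp [insert_subset_iff, hE, hF]) (Finset.card_pair hne)
  simpa [lt_aleph0_iff_set_finite] using this

theorem hasMaxWO_of_forall_rank_lt (φ : α → Ordinal.{u}) (m : 𝓔 → α)
    (hm : ∀ E : 𝓔, m E ∈ (E : Set α) ∧ ∀ x ∈ (E : Set α), x ≠ m E → φ x < φ (m E)) :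
    HasMaxWO 𝓔 := by
  let key : ⋃₀ 𝓔 → Ordinal.{u} × ⋃₀ 𝓔 := fun x => (φ x, x)
  let r := InvImage (Prod.Lex (· < ·) WellOrderingRel) key
  have : IsWellOrder _ r :=
    (RelEmbedding.preimage ⟨key, fun x y hxy => congrArg Prod.snd hxy⟩ _).isWellOrder
  refine ⟨r, this, fun E hE =>
    ⟨⟨m ⟨E, hE⟩, E, hE, (hm ⟨E, hE⟩).1⟩, (hm ⟨E, hE⟩).1, fun x hx hr => ?_⟩⟩
  by_cases hxm : (x : α) = m ⟨E, hE⟩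
  · obtain rfl : x = ⟨m ⟨E, hE⟩, E, hE, (hm ⟨E, hE⟩).1⟩ := Subtype.ext hxm
    exact irrefl _ hr
  · have hlt := (hm _).2 x hx hxm
    rcases Prod.lex_iff.1 hr with h | ⟨h, -⟩
    exacts [h.not_gt hlt, hlt.ne h.symm]

theorem hasMaxWO_of_forall_not_subset (ρ : Set α → Ordinal.{u}) (hρ : InjOn ρ 𝓔)
    (hnew : ∀ E ∈ 𝓔, ¬ E ⊆ ⋃₀ {F ∈ 𝓔 | ρ F < ρ E}) : HasMaxWO 𝓔 := by
  classical
  choose m hmE hmnew using fun E : 𝓔 => not_subset.1 (hnew E E.2)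
  have hle : ∀ E F : 𝓔, m F ∈ (E : Set α) → ρ F ≤ ρ E := fun E F hmF =>
    not_lt.1 fun h => hmnew F ⟨E, ⟨E.2, h⟩, hmF⟩
  have hm : Injective m := fun E F h =>
    Subtype.ext (hρ E.2 F.2 ((hle F E (h ▸ hmE F)).antisymm (hle E F (h ▸ hmE E))))
  let φ : α → Ordinal.{u} := fun x => if h : ∃ E, m E = x then succ (ρ h.choose) else 0
  have hφ : ∀ F, φ (m F) = succ (ρ F) := fun F => by
    have h : ∃ E, m E = m F := ⟨F, rfl⟩
    simp only [φ, dif_pos h, hm h.choose_spec]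
  refine hasMaxWO_of_forall_rank_lt φ m fun E => ⟨hmE E, fun x hx hxm => ?_⟩
  rw [hφ E]
  by_cases hxim : ∃ F, m F = x
  · obtain ⟨F, rfl⟩ := hxim
    rw [hφ F, succ_lt_succ_iff]
    exact (hle E F hx).lt_of_ne fun h => hxm (congrArg m (Subtype.ext (hρ F.2 E.2 h)))
  · simp only [φ, dif_neg hxim]
    exact bot_lt_succ _

theorem IsSparseRanking.hasMaxWO {κ : Cardinal.{u}} {X : Set α} {ρ : Set α → Ordinal.{u}}
    (h : IsSparseRanking κ X 𝓔 ρ) (h𝓔 : ∀ E ∈ 𝓔, #E = κ) : HasMaxWO 𝓔 :=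
  hasMaxWO_of_forall_not_subset ρ h.1 fun E hE hsub => (h.2 E hE).ne <| by
    rw [inter_eq_left.2 (hsub.trans subset_union_right), h𝓔 E hE]

end MaxWO

theorem maxWO_of_GCH_general {α : Type u}
    (hGCH : ∀ μ : Cardinal.{u}, ℵ₀ ≤ μ → 2 ^ μ = Order.succ μ)
    (κ : Cardinal.{u}) (hκ : Cardinal.aleph 2 ≤ κ)
    (𝓔 : Set (Set α))
    (hspec : ∀ E ∈ 𝓔, #E = κ)
    (hC : HasPropC 𝓔 2 ℵ₀) :
    HasMaxWO 𝓔 := by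
  obtain ⟨ρ, hρ⟩ := exists_isSparseRanking (X := ∅) hGCH hκ hspec hC.pairwise_finite_inter
    fun E _ => by simpa using (aleph_pos 2).trans_le hκ
  exact hρ.hasMaxWO hspec

/-- Assuming GCH, for all cardinals `ω₂ ≤ κ ≤ lam`, every hypergraph
`𝓔 ⊆ [lam]^κ` possessing property C(2,ω) has a maximizing well-ordering. -/
theorem maxWO_of_GCH {α : Type u}
    (hGCH : ∀ μ : Cardinal.{u}, ℵ₀ ≤ μ → 2 ^ μ = Order.succ μ)
    (κ lam : Cardinal.{u}) (hκ : Cardinal.aleph 2 ≤ κ) (hkl : κ ≤ lam)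
    (hα : #α = lam)
    (𝓔 : Set (Set α)) (hne : ∀ E ∈ 𝓔, E.Nonempty)
    (hspec : ∀ E ∈ 𝓔, #E = κ)
    (hC : HasPropC 𝓔 2 ℵ₀) :
    HasMaxWO 𝓔 :=
  maxWO_of_GCH_general hGCH κ hκ 𝓔 hspec hC
end

section
/- Let V be a set, κ an infinite cardinal, and 𝔸 a collection of hypergraphs whose edges are subsets of V. Assume: (a) if 𝓐 ∈ 𝔸 and 𝓑 is a shrink of 𝓐, then 𝓑 ∈ 𝔸; (b) every 𝓐 ∈ 𝔸 with |⋃𝓐| > κ has a good cut; and (c) every 𝓐 ∈ 𝔸 with |⋃𝓐| ≤ κ has a minimal vertex cover. Then every 𝓐 ∈ 𝔸 has a minimal vertex cover. -/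
/-!
Induction on `|⋃𝓐|`. Above `κ`, fix a good cut `⟨G β⟩` and give every edge `A` a level `β`
with `A ⊆ G (β + 1)` and `|G β ∩ A| < |A|`. Going up the levels, let `𝓑_β` consist of the sets
`A \ G β` for the edges `A` of level `β` missed by the covers `Y_γ`, `γ < β`, chosen so far:
it is a shrink of `𝓐` whose vertices lie in `G (β + 1)`, so by induction it has a minimal vertex
cover `Y_β`. The union of the `Y_β` is a minimal vertex cover of `𝓐`, because an edge of level
`β` lies in `G γ` for `γ > β` and so misses `Y_γ ⊆ ⋃ 𝓑_γ`; hence each vertex of `Y_β` keeps the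
private edge it had in `𝓑_β`.
-/

open Cardinal Set

universe u

variable {α : Type u}

theorem isMinVC_iff_forall_exists_inter_eq_singleton {𝓔 : Set (Set α)} {Y : Set α} :
    IsMinVC 𝓔 Y ↔ IsVC 𝓔 Y ∧ ∀ y ∈ Y, ∃ E ∈ 𝓔, Y ∩ E = {y} := by
  constructor
  · rintro ⟨hY, hmin⟩
    refine ⟨hY, fun y hy => ?_⟩
    have hnot := hmin _ (sdiff_singleton_ssubset.2 hy)
    simp only [IsVC, sdiff_subset.trans hY.1, true_and, not_forall, not_nonempty_iff_eq_empty,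
      exists_prop] at hnot
    obtain ⟨E, hE, hempty⟩ := hnot
    refine ⟨E, hE, eq_singleton_iff_nonempty_unique_mem.2 ⟨hY.2 E hE, fun x hx => ?_⟩⟩
    by_contra hxy
    exact (eq_empty_iff_forall_notMem.1 hempty) x ⟨⟨hx.1, hxy⟩, hx.2⟩
  · rintro ⟨hY, hprivate⟩
    refine ⟨hY, fun Z hZY hZ => ?_⟩
    obtain ⟨y, hyY, hyZ⟩ := exists_of_ssubset hZY
    obtain ⟨E, hE, hYE⟩ := hprivate y hyY
    obtain ⟨z, hzZ, hzE⟩ := hZ.2 E hE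
    have hzy : z ∈ Y ∩ E := ⟨hZY.1 hzZ, hzE⟩
    rw [hYE, mem_singleton_iff] at hzy
    exact hyZ (hzy ▸ hzZ)

section Layers

variable {ι : Type*} {𝓒 : Set (Set α)} {G : ι → Set α} {w : Set α → ι}

def layer (𝓒 : Set (Set α)) (G : ι → Set α) (w : Set α → ι) (o : ι) (T : Set α) :
    Set (Set α) :=
  (· \ G o) '' {A ∈ 𝓒 | w A = o ∧ Disjoint A T}

theorem isShrink_layer (hw : ∀ A ∈ 𝓒, #(G (w A) ∩ A : Set α) < #A) (o : ι) (T : Set α) :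
    IsShrink (layer 𝓒 G w o T) 𝓒 := by
  rintro _ ⟨A, ⟨hA, rfl, -⟩, rfl⟩
  refine ⟨A, hA, sdiff_subset, ?_⟩
  rw [sdiff_sdiff_right_self, inter_comm]
  exact hw A hA

theorem exists_isMinVC_layer [LT ι] [WellFoundedLT ι]
    (h : ∀ o T, HasMinVC (layer 𝓒 G w o T)) :
    ∃ f : ι → Set α, ∀ o, IsMinVC (layer 𝓒 G w o (⋃ β < o, f β)) (f o) := by
  choose F hF using h
  let f : ι → Set α := wellFounded_lt.fix fun o rec => F o (⋃ β, ⋃ h : β < o, rec β h)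
  refine ⟨f, fun o => ?_⟩
  rw [show f o = _ from wellFounded_lt.fix_eq _ o]
  exact hF _ _

variable [LinearOrder ι] {f : ι → Set α}
  (hf : ∀ o, IsMinVC (layer 𝓒 G w o (⋃ β < o, f β)) (f o))
include hf

theorem exists_mem_of_mem_layer_cover {o : ι} {x : α} (hx : x ∈ f o) :
    ∃ A ∈ 𝓒, w A = o ∧ x ∈ A ∧ x ∉ G o := by
  obtain ⟨_, ⟨A, ⟨hA, hwA, -⟩, rfl⟩, hxA, hxG⟩ := (hf o).1.1 hx
  exact ⟨A, hA, hwA, hxA, hxG⟩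

theorem disjoint_layer_cover_of_lt (hG : ∀ A ∈ 𝓒, ∀ A' ∈ 𝓒, w A < w A' → A ⊆ G (w A'))
    {A : Set α} (hA : A ∈ 𝓒) {γ : ι} (hγ : w A < γ) : Disjoint A (f γ) := by
  refine disjoint_right.2 fun x hx hxA => ?_
  obtain ⟨A', hA', rfl, -, hxG⟩ := exists_mem_of_mem_layer_cover hf hx
  exact hxG (hG A hA A' hA' hγ hxA)

theorem isMinVC_iUnion_layer_cover (hG : ∀ A ∈ 𝓒, ∀ A' ∈ 𝓒, w A < w A' → A ⊆ G (w A')) :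
    IsMinVC 𝓒 (⋃ o, f o) := by
  refine isMinVC_iff_forall_exists_inter_eq_singleton.2 ⟨⟨?_, fun A hA => ?_⟩, fun y hy => ?_⟩
  · refine iUnion_subset fun o x hx => ?_
    obtain ⟨A, hA, -, hxA, -⟩ := exists_mem_of_mem_layer_cover hf hx
    exact ⟨A, hA, hxA⟩
  · by_cases hT : Disjoint A (⋃ β < w A, f β)
    · obtain ⟨x, hxf, hxA, -⟩ := (hf (w A)).1.2 _ ⟨A, ⟨hA, rfl, hT⟩, rfl⟩
      exact ⟨x, mem_iUnion_of_mem _ hxf, hxA⟩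
    · obtain ⟨x, hxA, hx⟩ := not_disjoint_iff.1 hT
      obtain ⟨β, -, hxβ⟩ := mem_iUnion₂.1 hx
      exact ⟨x, mem_iUnion_of_mem _ hxβ, hxA⟩
  · obtain ⟨o, hyo⟩ := mem_iUnion.1 hy
    obtain ⟨_, ⟨A, ⟨hA, rfl, hT⟩, rfl⟩, hfA⟩ :=
      (isMinVC_iff_forall_exists_inter_eq_singleton.1 (hf o)).2 y hyo
    have hyA : y ∈ f (w A) ∩ (A \ G (w A)) := hfA ▸ mem_singleton y
    refine ⟨A, hA, eq_singleton_iff_unique_mem.2 ⟨⟨hy, hyA.2.1⟩, ?_⟩⟩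
    rintro z ⟨hz, hzA⟩
    obtain ⟨γ, hzγ⟩ := mem_iUnion.1 hz
    rcases lt_trichotomy γ (w A) with hlt | rfl | hgt
    · exact (disjoint_left.1 hT hzA (mem_iUnion₂.2 ⟨γ, hlt, hzγ⟩)).elim
    · obtain ⟨-, -, -, -, hzG⟩ := exists_mem_of_mem_layer_cover hf hzγ
      exact hfA.subset ⟨hzγ, hzA, hzG⟩
    · exact absurd hzγ (disjoint_left.1 (disjoint_layer_cover_of_lt hf hG hA hgt) hzA)

end Layers

theorem hasMinVC_of_isGoodCut {𝓒 : Set (Set α)} {G : Ordinal.{u} → Set α}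
    (hinf : ℵ₀ ≤ #(⋃₀ 𝓒 : Set α)) (hG : IsGoodCut 𝓒 G)
    (hsmall : ∀ 𝓑, IsShrink 𝓑 𝓒 → #(⋃₀ 𝓑 : Set α) < #(⋃₀ 𝓒 : Set α) → HasMinVC 𝓑) :
    HasMinVC 𝓒 := by
  obtain ⟨hmono, -, -, hGsmall, -, hcut⟩ := hG
  have hcof : Order.IsSuccLimit (#(⋃₀ 𝓒 : Set α)).ord.cof.ord :=
    isSuccLimit_ord (Ordinal.aleph0_le_cof_iff.2 (Ordinal.one_lt_cof_iff.2 (isSuccLimit_ord hinf)))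
  choose! w hwc hwG hwA using hcut
  have hlayer : ∀ o T, HasMinVC (layer 𝓒 G w o T) := by
    intro o T
    refine hsmall _ (isShrink_layer hwA o T) ?_
    rcases (layer 𝓒 G w o T).eq_empty_or_nonempty with hempty | ⟨_, A, ⟨hA, rfl, -⟩, rfl⟩
    · rw [hempty, sUnion_empty, mk_eq_zero]
      exact aleph0_pos.trans_le hinf
    · calc #(⋃₀ layer 𝓒 G w (w A) T : Set α)
          ≤ #(G (w A + 1)) := mk_le_mk_of_subset <| sUnion_subset <| by
            rintro _ ⟨A', ⟨hA', hwA', -⟩, rfl⟩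
            exact sdiff_subset.trans (hwA' ▸ hwG A' hA')
        _ < #(⋃₀ 𝓒 : Set α) :=
          (hGsmall _ (Order.succ_eq_add_one (w A) ▸ hcof.succ_lt (hwc A hA))).1
  obtain ⟨f, hf⟩ := exists_isMinVC_layer hlayer
  refine ⟨_, isMinVC_iUnion_layer_cover hf fun A hA A' hA' hlt => ?_⟩
  exact (hwG A hA).trans (hmono _ _ (Order.add_one_le_of_lt hlt) (hwc A' hA'))

theorem minVC_step_up_general {α : Type u} (κ : Cardinal.{u}) (hκ : ℵ₀ ≤ κ)
    (𝔸 : Set (Set (Set α)))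
    (ha : ∀ 𝓐 ∈ 𝔸, ∀ 𝓑 : Set (Set α), IsShrink 𝓑 𝓐 → 𝓑 ∈ 𝔸)
    (hb : ∀ 𝓐 ∈ 𝔸, κ < #(⋃₀ 𝓐 : Set α) → ∃ G, IsGoodCut 𝓐 G)
    (hc : ∀ 𝓐 ∈ 𝔸, #(⋃₀ 𝓐 : Set α) ≤ κ → HasMinVC 𝓐) :
    ∀ 𝓐 ∈ 𝔸, HasMinVC 𝓐 := by
  intro 𝓐
  induction 𝓐 using (InvImage.wf (fun 𝓐 : Set (Set α) => #(⋃₀ 𝓐 : Set α)) wellFounded_lt).induction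
    with | _ 𝓐 IH
  intro h𝓐
  rcases le_or_gt #(⋃₀ 𝓐 : Set α) κ with hle | hlt
  · exact hc 𝓐 h𝓐 hle
  obtain ⟨G, hG⟩ := hb 𝓐 h𝓐 hlt
  exact hasMinVC_of_isGoodCut (hκ.trans hlt.le) hG fun 𝓑 h𝓑 hlt' => IH 𝓑 hlt' (ha 𝓐 h𝓐 𝓑 h𝓑)

/-- Stepping-up for minimal vertex covers: if `𝔸` is closed under shrinks,
every member with vertex set of cardinality `> κ` has a good cut, and every
member with vertex set of cardinality `≤ κ` has a minimal vertex cover, then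
every member of `𝔸` has a minimal vertex cover. -/
theorem minVC_step_up {α : Type u} (κ : Cardinal.{u}) (hκ : ℵ₀ ≤ κ)
    (𝔸 : Set (Set (Set α)))
    (hne : ∀ 𝓐 ∈ 𝔸, ∀ A ∈ 𝓐, A.Nonempty)
    (ha : ∀ 𝓐 ∈ 𝔸, ∀ 𝓑 : Set (Set α), IsShrink 𝓑 𝓐 → 𝓑 ∈ 𝔸)
    (hb : ∀ 𝓐 ∈ 𝔸, κ < #(⋃₀ 𝓐 : Set α) → ∃ G, IsGoodCut 𝓐 G)
    (hc : ∀ 𝓐 ∈ 𝔸, #(⋃₀ 𝓐 : Set α) ≤ κ → HasMinVC 𝓐) :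
    ∀ 𝓐 ∈ 𝔸, HasMinVC 𝓐 :=
  minVC_step_up_general κ hκ 𝔸 ha hb hc
end

section
/- Let V be a set, κ an infinite cardinal, and 𝔸 a collection of hypergraphs whose edges are subsets of V. Assume: (a) if 𝓐 ∈ 𝔸 and 𝓑 is a shrink of 𝓐, then 𝓑 ∈ 𝔸; (b) every 𝓐 ∈ 𝔸 with |⋃𝓐| > κ has a good cut; and (c') every 𝓐 ∈ 𝔸 with |⋃𝓐| ≤ κ has a maximizing well-ordering. Then every 𝓐 ∈ 𝔸 has a maximizing well-ordering. -/
open Cardinal Set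

universe u

/-!
Induct on `|⋃₀ 𝓐|`. Above `κ`, a good cut `G` splits the vertices into layers
`G (β + 1) ∖ G β`, and the edges `A ∖ G β` assigned to layer `β` form a shrink of `𝓐` on fewer
than `|⋃₀ 𝓐|` vertices (the cofinality is a limit ordinal, so `G (β + 1)` is still small).
By induction it has a maximizing well-ordering. Ordering the vertices lexicographically by
layer, then by that well-ordering, then arbitrarily, maximizes every edge `A`: its vertices
lie in layers `≤ β`, and those in layer `β` form the edge `A ∖ G β`.
-/

/-- `t` is defined on all of `α` rather than on the subtype `⋃₀ 𝓔`, so that ranks of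
different hypergraphs can be combined without dependent casts. -/
def IsMaxRank {α : Type u} {β : Type*} [LinearOrder β] (𝓔 : Set (Set α)) (t : α → β) : Prop :=
  InjOn t (⋃₀ 𝓔) ∧ ∀ E ∈ 𝓔, ∃ m ∈ E, ∀ x ∈ E, t x ≤ t m

theorem IsMaxRank.hasMaxWO {α : Type u} {β : Type*} [LinearOrder β] [WellFoundedLT β]
    {𝓔 : Set (Set α)} {t : α → β} (ht : IsMaxRank 𝓔 t) : HasMaxWO 𝓔 := by
  refine ⟨_, (RelEmbedding.preimage ⟨_, ht.1.injective⟩ (· < ·)).isWellOrder, fun E hE => ?_⟩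
  obtain ⟨m, hmE, hm⟩ := ht.2 E hE
  exact ⟨⟨m, subset_sUnion_of_mem hE hmE⟩, hmE, fun x hx => (hm x hx).not_gt⟩

theorem HasMaxWO.exists_isMaxRank {α : Type u} {𝓔 : Set (Set α)} (h : HasMaxWO 𝓔) :
    ∃ t : α → Ordinal.{u}, IsMaxRank 𝓔 t := by
  classical
  obtain ⟨r, hr, hmax⟩ := h
  refine ⟨fun x => if hx : x ∈ ⋃₀ 𝓔 then Ordinal.typein r ⟨x, hx⟩ else 0, ?_, ?_⟩
  · intro x hx y hy hxy
    simp only [dif_pos hx, dif_pos hy] at hxy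
    exact congrArg Subtype.val (Ordinal.typein_injective r hxy)
  · intro E hE
    obtain ⟨m, hmE, hm⟩ := hmax E hE
    refine ⟨m, hmE, fun x hx => ?_⟩
    have hxU : x ∈ ⋃₀ 𝓔 := subset_sUnion_of_mem hE hx
    simp only [dif_pos hxU, dif_pos m.2]
    exact not_lt.1 ((Ordinal.typein_lt_typein r).not.2 (hm ⟨x, hxU⟩ hx))

def cutShrink {α : Type u} (𝓐 : Set (Set α)) (G : Ordinal.{u} → Set α) (β : Ordinal.{u}) :
    Set (Set α) :=
  (· \ G β) '' {A ∈ 𝓐 | A ⊆ G (β + 1) ∧ #(G β ∩ A : Set α) < #A}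

section cutShrink

variable {α : Type u} {𝓐 : Set (Set α)} {G : Ordinal.{u} → Set α} {β : Ordinal.{u}}

theorem isShrink_cutShrink : IsShrink (cutShrink 𝓐 G β) 𝓐 := by
  rintro _ ⟨A, ⟨hA, -, hcard⟩, rfl⟩
  refine ⟨A, hA, sdiff_subset, ?_⟩
  rwa [sdiff_sdiff_right_self, inter_comm]

theorem sUnion_cutShrink_subset : ⋃₀ cutShrink 𝓐 G β ⊆ G (β + 1) := by
  rintro x ⟨_, ⟨A, ⟨-, hAG, -⟩, rfl⟩, hx⟩
  exact hAG hx.1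

theorem mk_sUnion_cutShrink_lt (hG : IsGoodCut 𝓐 G) (h𝓐 : ℵ₀ ≤ #(⋃₀ 𝓐 : Set α))
    (hβ : β < (#(⋃₀ 𝓐 : Set α)).ord.cof.ord) :
    #(⋃₀ cutShrink 𝓐 G β : Set α) < #(⋃₀ 𝓐 : Set α) := by
  have hlim : Order.IsSuccLimit (#(⋃₀ 𝓐 : Set α)).ord.cof.ord :=
    isSuccLimit_ord (Ordinal.aleph0_le_cof_iff.2 (Ordinal.one_lt_cof_iff.2 (isSuccLimit_ord h𝓐)))
  have hβ' : β + 1 < (#(⋃₀ 𝓐 : Set α)).ord.cof.ord := by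
    rw [← Order.succ_eq_add_one]
    exact hlim.succ_lt hβ
  exact (mk_le_mk_of_subset sUnion_cutShrink_subset).trans_lt (hG.2.2.2.1 _ hβ').1

end cutShrink

noncomputable def cutLayer {α : Type u} (G : Ordinal.{u} → Set α) (x : α) : Ordinal.{u} :=
  sInf {β | x ∈ G (β + 1)}

section cutLayer

variable {α : Type u} {G : Ordinal.{u} → Set α} {c β : Ordinal.{u}} {x : α}

theorem cutLayer_le (hx : x ∈ G (β + 1)) : cutLayer G x ≤ β :=
  csInf_le' hx

theorem mem_cutLayer_add_one (hx : x ∈ G (β + 1)) : x ∈ G (cutLayer G x + 1) :=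
  csInf_mem (s := {γ | x ∈ G (γ + 1)}) ⟨β, hx⟩

theorem exists_lt_mem_succ_of_mem (h0 : G 0 = ∅)
    (hcont : ∀ β < c, Order.IsSuccLimit β → G β = ⋃ γ ∈ Iio β, G γ)
    (hβ : β < c) (hx : x ∈ G β) : ∃ γ < β, x ∈ G (γ + 1) := by
  induction β using WellFoundedLT.induction with
  | ind β ih =>
    rcases Ordinal.zero_or_succ_or_isSuccLimit β with rfl | ⟨γ, rfl⟩ | hlim
    · simp [h0] at hx
    · exact ⟨γ, Order.lt_succ γ, by rwa [← Order.succ_eq_add_one]⟩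
    · rw [hcont β hβ hlim] at hx
      obtain ⟨γ, hγ, hxγ⟩ := mem_iUnion₂.1 hx
      obtain ⟨δ, hδ, hxδ⟩ := ih γ hγ (hγ.trans hβ) hxγ
      exact ⟨δ, hδ.trans hγ, hxδ⟩

theorem cutLayer_lt (h0 : G 0 = ∅)
    (hcont : ∀ β < c, Order.IsSuccLimit β → G β = ⋃ γ ∈ Iio β, G γ)
    (hβ : β < c) (hx : x ∈ G β) : cutLayer G x < β := by
  obtain ⟨γ, hγ, hxγ⟩ := exists_lt_mem_succ_of_mem h0 hcont hβ hx
  exact (cutLayer_le hxγ).trans_lt hγ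

theorem cutLayer_eq (hmono : ∀ β γ, β ≤ γ → γ < c → G β ⊆ G γ) (hβ : β < c)
    (hx : x ∈ G (β + 1)) (hxβ : x ∉ G β) : cutLayer G x = β := by
  refine (cutLayer_le hx).antisymm (not_lt.1 fun hlt => hxβ ?_)
  refine hmono _ β ?_ hβ (mem_cutLayer_add_one hx)
  rw [← Order.succ_eq_add_one]
  exact Order.succ_le_of_lt hlt

end cutLayer

theorem IsGoodCut.isMaxRank {α : Type u} {𝓐 : Set (Set α)} {G : Ordinal.{u} → Set α}
    (hG : IsGoodCut 𝓐 G) {t : Ordinal.{u} → α → Ordinal.{u}}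
    (ht : ∀ β < (#(⋃₀ 𝓐 : Set α)).ord.cof.ord, IsMaxRank (cutShrink 𝓐 G β) (t β)) :
    IsMaxRank 𝓐 fun x =>
      toLex (cutLayer G x, toLex (t (cutLayer G x) x, Ordinal.typein WellOrderingRel x)) := by
  obtain ⟨hmono, h0, hcont, -, -, hcut⟩ := hG
  refine ⟨fun x _ y _ hxy => ?_, fun A hA => ?_⟩
  · simp only [toLex_inj, Prod.mk.injEq] at hxy
    exact Ordinal.typein_injective _ hxy.2.2
  obtain ⟨β, hβ, hAG, hcard⟩ := hcut A hA
  have hE : A \ G β ∈ cutShrink 𝓐 G β := ⟨A, ⟨hA, hAG, hcard⟩, rfl⟩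
  obtain ⟨m, ⟨hmA, hmβ⟩, hm⟩ := (ht β hβ).2 _ hE
  refine ⟨m, hmA, fun x hx => ?_⟩
  rcases eq_or_ne x m with rfl | hxm
  · exact le_rfl
  have hLm : cutLayer G m = β := cutLayer_eq hmono hβ (hAG hmA) hmβ
  rw [Prod.Lex.toLex_le_toLex, hLm]
  by_cases hxβ : x ∈ G β
  · exact Or.inl (cutLayer_lt h0 hcont hβ hxβ)
  have hLx : cutLayer G x = β := cutLayer_eq hmono hβ (hAG hx) hxβ
  refine Or.inr ⟨hLx, (Prod.Lex.toLex_lt_toLex.2 (Or.inl ?_)).le⟩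
  rw [hLx]
  refine (hm x ⟨hx, hxβ⟩).lt_of_ne fun h => hxm ((ht β hβ).1 ?_ ?_ h)
  · exact subset_sUnion_of_mem hE ⟨hx, hxβ⟩
  · exact subset_sUnion_of_mem hE ⟨hmA, hmβ⟩

theorem maxWO_step_up_general {α : Type u} (κ : Cardinal.{u}) (hκ : ℵ₀ ≤ κ)
    (𝔸 : Set (Set (Set α)))
    (ha : ∀ 𝓐 ∈ 𝔸, ∀ 𝓑 : Set (Set α), IsShrink 𝓑 𝓐 → 𝓑 ∈ 𝔸)
    (hb : ∀ 𝓐 ∈ 𝔸, κ < #(⋃₀ 𝓐 : Set α) → ∃ G, IsGoodCut 𝓐 G)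
    (hc : ∀ 𝓐 ∈ 𝔸, #(⋃₀ 𝓐 : Set α) ≤ κ → HasMaxWO 𝓐) :
    ∀ 𝓐 ∈ 𝔸, HasMaxWO 𝓐 := by
  intro 𝓐
  induction 𝓐 using (InvImage.wf (fun 𝓐 : Set (Set α) => #(⋃₀ 𝓐 : Set α)) wellFounded_lt).induction
    with | _ 𝓐 IH => ?_
  intro h𝓐
  rcases le_or_gt #(⋃₀ 𝓐 : Set α) κ with hsmall | hlarge
  · exact hc 𝓐 h𝓐 hsmall
  obtain ⟨G, hG⟩ := hb 𝓐 h𝓐 hlarge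
  have hrank : ∀ β, ∃ t : α → Ordinal.{u},
      β < (#(⋃₀ 𝓐 : Set α)).ord.cof.ord → IsMaxRank (cutShrink 𝓐 G β) t := by
    intro β
    by_cases hβ : β < (#(⋃₀ 𝓐 : Set α)).ord.cof.ord
    · obtain ⟨t, ht⟩ := (IH _ (mk_sUnion_cutShrink_lt hG (hκ.trans hlarge.le) hβ)
        (ha 𝓐 h𝓐 _ isShrink_cutShrink)).exists_isMaxRank
      exact ⟨t, fun _ => ht⟩
    · exact ⟨0, fun h => absurd h hβ⟩
  choose t ht using hrank
  exact (hG.isMaxRank ht).hasMaxWO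

/-- Stepping-up for maximizing well-orderings: if `𝔸` is closed under shrinks,
every member with vertex set of cardinality `> κ` has a good cut, and every
member with vertex set of cardinality `≤ κ` has a maximizing well-ordering,
then every member of `𝔸` has a maximizing well-ordering. -/
theorem maxWO_step_up {α : Type u} (κ : Cardinal.{u}) (hκ : ℵ₀ ≤ κ)
    (𝔸 : Set (Set (Set α)))
    (hne : ∀ 𝓐 ∈ 𝔸, ∀ A ∈ 𝓐, A.Nonempty)
    (ha : ∀ 𝓐 ∈ 𝔸, ∀ 𝓑 : Set (Set α), IsShrink 𝓑 𝓐 → 𝓑 ∈ 𝔸)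
    (hb : ∀ 𝓐 ∈ 𝔸, κ < #(⋃₀ 𝓐 : Set α) → ∃ G, IsGoodCut 𝓐 G)
    (hc : ∀ 𝓐 ∈ 𝔸, #(⋃₀ 𝓐 : Set α) ≤ κ → HasMaxWO 𝓐) :
    ∀ 𝓐 ∈ 𝔸, HasMaxWO 𝓐 :=
  maxWO_step_up_general κ hκ 𝔸 ha hb hc
end

section
/- Assume GCH and let κ ≥ ω₂ be a cardinal. Then every hypergraph 𝓐 ⊆ [κ]^κ (i.e., every edge is a subset of κ of cardinality κ) possessing property C(2,ω) has cardinality at most κ and has a maximizing well-ordering. -/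
open Cardinal Set

universe u

/-!
Two distinct edges meet in a finite set. Fix a well-ordering of `α` of type `κ`. An uncountable
edge `A` has a point `a` with infinitely many points of `A` below it, and `A` is then determined by
`a` together with its trace below `a`; by GCH there are at most `κ` such pairs. Enumerating the at
most `κ` edges in order type `|𝓐|`, each edge `A_ξ` is not covered by the earlier ones, which
would cover it by fewer than `κ` finite pieces. Ordering the vertices by the first edge containing
them, and putting last in each block a vertex first covered by that edge, gives every edge a
largest element.
-/

theorem HasPropC.pairwise_finite_inter_s11 {α : Type u} {𝓔 : Set (Set α)} (hC : HasPropC 𝓔 2 ℵ₀) :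
    𝓔.Pairwise fun A B => (A ∩ B).Finite := by
  intro A hA B hB hAB
  have h := hC {A, B} (by simp [insert_subset_iff, hA, hB]) (Finset.card_pair hAB)
  rw [Finset.coe_pair, sInter_pair] at h
  exact lt_aleph0_iff_set_finite.mp h

theorem two_pow_le_of_lt_of_GCH (hGCH : ∀ μ : Cardinal.{u}, ℵ₀ ≤ μ → 2 ^ μ = Order.succ μ)
    {μ κ : Cardinal.{u}} (hκ : ℵ₀ ≤ κ) (hμ : μ < κ) : 2 ^ μ ≤ κ := by
  rcases le_or_gt ℵ₀ μ with h | h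
  · rw [hGCH μ h]
    exact Order.succ_le_of_lt hμ
  · exact (power_lt_aleph0 natCast_lt_aleph0 h).le.trans hκ

theorem Set.exists_infinite_inter_Iio {β : Type*} [LinearOrder β] {A : Set β}
    (hA : ¬ A.Countable) : ∃ b, (A ∩ Iio b).Infinite := by
  by_contra! hfin
  have hmono : StrictMono fun a : A => (A ∩ Iio (a : β)).ncard := by
    intro a b hab
    refine ncard_lt_ncard ((ssubset_iff_of_subset ?_).2 ⟨a, ⟨a.2, hab⟩, fun h => h.2.false⟩) (hfin b)
    exact inter_subset_inter_right _ (Iio_subset_Iio hab.le)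
  exact hA (countable_coe_iff.mp hmono.injective.countable)

theorem mk_le_of_pairwise_finite_inter_s11 {β : Type u} [LinearOrder β] {κ : Cardinal.{u}}
    (hκ : ℵ₀ ≤ κ) (hpow : ∀ μ < κ, 2 ^ μ ≤ κ) (hβ : #β ≤ κ) (hIio : ∀ b : β, #(Iio b) < κ)
    {𝓐 : Set (Set β)} (hdisj : 𝓐.Pairwise fun A B => (A ∩ B).Finite)
    (hunc : ∀ A ∈ 𝓐, ¬ A.Countable) : #𝓐 ≤ κ := by
  choose a ha using fun A : 𝓐 => exists_infinite_inter_Iio (hunc A A.2)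
  -- `A` is recovered from `a A` and its trace below `a A`, an infinite subset of `A`
  let code : 𝓐 → Σ b : β, Set (Iio b) := fun A => ⟨a A, Subtype.val ⁻¹' A⟩
  have hcode : Function.Injective code := by
    intro A B h
    have htrace : (A : Set β) ∩ Iio (a A) ⊆ B := by
      have h' := congrArg (fun c : Σ b : β, Set (Iio b) => Subtype.val '' c.2) h
      simp only [code, Subtype.image_preimage_coe] at h'
      exact fun x ⟨hxA, hxI⟩ => (h' ▸ ⟨hxI, hxA⟩ : x ∈ Iio (a B) ∩ B).2
    by_contra hne
    exact ha A ((hdisj A.2 B.2 (Subtype.coe_ne_coe.mpr hne)).subset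
      (subset_inter inter_subset_left htrace))
  calc #𝓐 ≤ #(Σ b : β, Set (Iio b)) := mk_le_of_injective hcode
    _ = sum fun b : β => 2 ^ #(Iio b) := by simp only [mk_sigma, mk_set]
    _ ≤ sum fun _ : β => κ := sum_le_sum _ _ fun b => hpow _ (hIio b)
    _ = #β * κ := sum_const' _ _
    _ ≤ κ := (mul_le_mul' hβ le_rfl).trans (mul_eq_self hκ).le

theorem mk_le_mul_aleph0_of_subset_biUnion {α ι : Type u} {s : Set α} {I : Set ι}
    {t : ι → Set α} (hs : s ⊆ ⋃ i ∈ I, t i) (hfin : ∀ i ∈ I, (s ∩ t i).Finite) :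
    #s ≤ #I * ℵ₀ := by
  calc #s = #(⋃ i : I, s ∩ t i : Set α) := by
        rw [← inter_iUnion, ← biUnion_eq_iUnion I fun i _ => t i, inter_eq_left.2 hs]
    _ ≤ sum fun i : I => #(s ∩ t i : Set α) := mk_iUnion_le_sum_mk
    _ ≤ sum fun _ : I => ℵ₀ := sum_le_sum _ _ fun i => (lt_aleph0_iff_set_finite.2 (hfin i i.2)).le
    _ = #I * ℵ₀ := sum_const' _ _

theorem hasMaxWO_of_injective {α : Type u} {𝓔 : Set (Set α)} {L : Type*} [LinearOrder L]
    [WellFoundedLT L] (f : ⋃₀ 𝓔 → L) (hf : Function.Injective f)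
    (hmax : ∀ E ∈ 𝓔, ∃ m : ⋃₀ 𝓔, (m : α) ∈ E ∧ ∀ x : ⋃₀ 𝓔, (x : α) ∈ E → f x ≤ f m) :
    HasMaxWO 𝓔 :=
  ⟨fun x y => f x < f y,
    (RelEmbedding.mk ⟨f, hf⟩ Iff.rfl : _ ↪r (· < · : L → L → Prop)).isWellOrder,
    fun E hE => (hmax E hE).imp fun _ ⟨hm, hle⟩ => ⟨hm, fun x hx => (hle x hx).not_gt⟩⟩

theorem hasMaxWO_range_of_not_subset_biUnion {α : Type u} {ι : Type*} [LinearOrder ι]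
    [WellFoundedLT ι] (A : ι → Set α) (hA : ∀ ξ, ¬ A ξ ⊆ ⋃ η < ξ, A η) : HasMaxWO (range A) := by
  classical
  choose m hmA hmnew using fun ξ => not_subset.1 (hA ξ)
  have hcov : ∀ x : ⋃₀ range A, ∃ ξ, (x : α) ∈ A ξ := by
    rintro ⟨x, _, ⟨ξ, rfl⟩, hx⟩
    exact ⟨ξ, hx⟩
  let blk : ⋃₀ range A → ι := fun x => wellFounded_lt.min {ξ | (x : α) ∈ A ξ} (hcov x)
  have blk_mem : ∀ x, (x : α) ∈ A (blk x) := fun x =>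
    wellFounded_lt.min_mem {ξ | (x : α) ∈ A ξ} (hcov x)
  have blk_le : ∀ (x : ⋃₀ range A) ξ, (x : α) ∈ A ξ → blk x ≤ ξ := fun x _ h =>
    wellFounded_lt.min_le (s := {ξ | (x : α) ∈ A ξ}) h
  -- sort by first edge, then within the block of `ξ` put `m ξ` last, then break ties arbitrarily
  refine hasMaxWO_of_injective (fun x => toLex (blk x,
    toLex (decide ((x : α) = m (blk x)), embeddingToCardinal (x : α)))) ?_ ?_
  · intro x y h
    exact Subtype.ext (embeddingToCardinal.injective (congrArg (fun p => (ofLex (ofLex p).2).2) h))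
  · rintro _ ⟨ξ, rfl⟩
    let mξ : ⋃₀ range A := ⟨m ξ, A ξ, mem_range_self ξ, hmA ξ⟩
    have blk_mξ : blk mξ = ξ := (blk_le mξ ξ (hmA ξ)).antisymm
      (not_lt.1 fun h => hmnew ξ (mem_biUnion h (blk_mem mξ)))
    refine ⟨mξ, hmA ξ, fun x hx => ?_⟩
    simp only [Prod.Lex.toLex_le_toLex, blk_mξ]
    rcases (blk_le x ξ hx).lt_or_eq with hlt | rfl
    · exact Or.inl hlt
    refine Or.inr ⟨rfl, ?_⟩
    by_cases hxm : (x : α) = m (blk x)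
    · exact Or.inr ⟨by simp [hxm, mξ], by simp [hxm, mξ]⟩
    · exact Or.inl (by simp [hxm, mξ])

theorem hasMaxWO_of_pairwise_finite_inter {α : Type u} {κ : Cardinal.{u}} (hκ : ℵ₀ < κ)
    {𝓐 : Set (Set α)} (hspec : ∀ A ∈ 𝓐, #A = κ) (hdisj : 𝓐.Pairwise fun A B => (A ∩ B).Finite)
    (hcard : #𝓐 ≤ κ) : HasMaxWO 𝓐 := by
  obtain ⟨e⟩ : Nonempty ((#𝓐).ord.ToType ≃ 𝓐) := Cardinal.eq.1 (by simp)
  have hrange : range (fun ξ => (e ξ : Set α)) = 𝓐 := by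
    rw [range_comp' Subtype.val e, e.surjective.range_eq, image_univ, Subtype.range_coe]
  rw [← hrange]
  refine hasMaxWO_range_of_not_subset_biUnion _ fun ξ hcover => ?_
  have hle : #(e ξ : Set α) ≤ #(Iio ξ) * ℵ₀ := by
    refine mk_le_mul_aleph0_of_subset_biUnion (I := Iio ξ) hcover fun η hη => ?_
    exact hdisj (e ξ).2 (e η).2 (Subtype.coe_ne_coe.2 (e.injective.ne hη.ne'))
  have hIio : #(Iio ξ) < #𝓐 := by simpa using mk_Iio_lt ξ (by simp)
  exact (hle.trans_lt (mul_lt_of_lt hκ.le (hIio.trans_le hcard) hκ)).ne (hspec _ (e ξ).2)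

/-- Assuming GCH, for `κ ≥ ω₂` every hypergraph `𝓐 ⊆ [κ]^κ` possessing property
C(2,ω) has at most `κ` edges and has a maximizing well-ordering. -/
theorem maxWO_kappa_kappa_of_GCH {α : Type u}
    (hGCH : ∀ μ : Cardinal.{u}, ℵ₀ ≤ μ → 2 ^ μ = Order.succ μ)
    (κ : Cardinal.{u}) (hκ : Cardinal.aleph 2 ≤ κ) (hα : #α = κ)
    (𝓐 : Set (Set α)) (hspec : ∀ A ∈ 𝓐, #A = κ)
    (hC : HasPropC 𝓐 2 ℵ₀) :
    #𝓐 ≤ κ ∧ HasMaxWO 𝓐 := by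
  have hκ₀ : ℵ₀ < κ := aleph0_lt_aleph_one.trans_le ((aleph_le_aleph.2 one_le_two).trans hκ)
  have hdisj := hC.pairwise_finite_inter_s11
  have hunc : ∀ A ∈ 𝓐, ¬ A.Countable := fun A hA hcount =>
    (le_aleph0_iff_set_countable.2 hcount).not_gt (hspec A hA ▸ hκ₀)
  have hcard : #𝓐 ≤ κ := by
    obtain ⟨e⟩ : Nonempty (α ≃ κ.ord.ToType) := Cardinal.eq.1 (by simp [hα])
    let := LinearOrder.lift' e e.injective
    have hIio (a : α) : #(Iio a) < κ :=
      (mk_preimage_of_injective e (Iio (e a)) e.injective).trans_lt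
        (by simpa using mk_Iio_lt (e a) (by simp))
    exact mk_le_of_pairwise_finite_inter_s11 hκ₀.le (fun _ => two_pow_le_of_lt_of_GCH hGCH hκ₀.le)
      hα.le hIio hdisj hunc
  exact ⟨hcard, hasMaxWO_of_pairwise_finite_inter hκ₀ hspec hdisj hcard⟩
end
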